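/- arXiv:1712.08516 — 12 statements merged into one kernel-verified Lean document; each statement's English description precedes it below -/
import Mathlib

section
/- For all subsets X and Y of Λ*, the lower cone of the elementwise concatenation XY equals the elementwise concatenation of the lower cones: (XY)^∇ = X^∇ Y^∇. -/
/-- The Higman ordering on words over an ordered alphabet `Λ`:
`x ≤ y` iff `y` has a subword that is letterwise above `x`. -/
def HigmanLE {Λ : Type*} [PartialOrder Λ] (x y : List Λ) : Prop :=
  List.SublistForall₂ (· ≤ ·) x y

/-- The strict Higman ordering. -/
def HigmanLT {Λ : Type*} [PartialOrder Λ] (x y : List Λ) : Prop :=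
  HigmanLE x y ∧ ¬ HigmanLE y x

/-- The upper cone `X^Δ` of a set of words. -/
def upperCone {Λ : Type*} [PartialOrder Λ] (X : Set (List Λ)) : Set (List Λ) :=
  {y | ∀ x ∈ X, HigmanLE x y}

/-- The lower cone `X^∇` of a set of words. -/
def lowerCone {Λ : Type*} [PartialOrder Λ] (X : Set (List Λ)) : Set (List Λ) :=
  {y | ∀ x ∈ X, HigmanLE y x}

/-- Elementwise concatenation `XY` of two sets of words. -/
def concatSet {Λ : Type*} (X Y : Set (List Λ)) : Set (List Λ) :=
  {w | ∃ x ∈ X, ∃ y ∈ Y, w = x ++ y}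

/-- A (MacNeille) closed upper set of words: `Z = Z^{∇Δ}`. -/
def ClosedUpper {Λ : Type*} [PartialOrder Λ] (Z : Set (List Λ)) : Prop :=
  Z = upperCone (lowerCone Z)

/-- A (MacNeille) closed lower set of words: `W = W^{Δ∇}`. -/
def ClosedLower {Λ : Type*} [PartialOrder Λ] (W : Set (List Λ)) : Prop :=
  W = lowerCone (upperCone W)

/-- An upper set of words with respect to the Higman ordering. -/
def IsUpperWordSet {Λ : Type*} [PartialOrder Λ] (Z : Set (List Λ)) : Prop :=
  ∀ x y : List Λ, HigmanLE x y → x ∈ Z → y ∈ Z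

/-- A finitely generated lower set of words. -/
def FinGenLowerWords {Λ : Type*} [PartialOrder Λ] (S : Set (List Λ)) : Prop :=
  ∃ F : Finset (List Λ), S = {x | ∃ w ∈ F, HigmanLE x w}

/-- A finitely generated lower set of letters. -/
def FinGenLowerLetters {Λ : Type*} [PartialOrder Λ] (S : Set Λ) : Prop :=
  ∃ F : Finset Λ, S = {x | ∃ w ∈ F, x ≤ w}

/-- Well-foundedness: no infinite strictly decreasing sequence. -/
def NoInfiniteDescent {Λ : Type*} [PartialOrder Λ] : Prop :=
  ¬ ∃ f : ℕ → Λ, ∀ n, f (n + 1) < f n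

/-- Stability under the cancellation rule. -/
def StableCancel {Λ : Type*} [PartialOrder Λ] (Z : Set (List Λ)) : Prop :=
  ∀ (y z : List Λ) (α β : Λ), (¬ ∃ c, c ≤ α ∧ c ≤ β) →
    y ++ α :: z ∈ Z → y ++ β :: z ∈ Z → y ++ z ∈ Z

/-- Stability under the reduction rule. -/
def StableReduce {Λ : Type*} [PartialOrder Λ] (Z : Set (List Λ)) : Prop :=
  ∀ (y z : List Λ) (α γ : Λ), α < γ →
    y ++ α :: α :: z ∈ Z → y ++ γ :: z ∈ Z → y ++ α :: z ∈ Z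

/-- Stability under the permutation rule. -/
def StablePerm {Λ : Type*} [PartialOrder Λ] (Z : Set (List Λ)) : Prop :=
  ∀ (y z : List Λ) (α β γ : Λ), ¬ α ≤ β → ¬ β ≤ α → α < γ → β < γ →
    y ++ α :: β :: z ∈ Z → y ++ γ :: z ∈ Z → y ++ β :: α :: z ∈ Z

/-- Stability under the meet rule. -/
def StableMeet {Λ : Type*} [PartialOrder Λ] (Z : Set (List Λ)) : Prop :=
  ∀ (y z : List Λ) (α β m : Λ), ¬ α ≤ β → ¬ β ≤ α →
    IsGLB ({α, β} : Set Λ) m →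
    y ++ α :: z ∈ Z → y ++ β :: z ∈ Z → y ++ m :: z ∈ Z

/-- Stability under all four rules. -/
def StableAll {Λ : Type*} [PartialOrder Λ] (Z : Set (List Λ)) : Prop :=
  StableCancel Z ∧ StableReduce Z ∧ StablePerm Z ∧ StableMeet Z

/-- `[Y]`: the smallest upper set containing `Y` that is stable under the four rules. -/
def stableClosure {Λ : Type*} [PartialOrder Λ] (Y : Set (List Λ)) : Set (List Λ) :=
  ⋂₀ {Z : Set (List Λ) | Y ⊆ Z ∧ IsUpperWordSet Z ∧ StableAll Z}


private lemma higmanLE_append {Λ : Type*} [PartialOrder Λ] {u v x y : List Λ}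
    (hu : HigmanLE u x) (hv : HigmanLE v y) : HigmanLE (u ++ v) (x ++ y) := by
  rw [HigmanLE, List.sublistForall₂_iff] at hu hv ⊢
  obtain ⟨m, hm, hms⟩ := hu
  obtain ⟨m', hm', hms'⟩ := hv
  exact ⟨m ++ m', List.rel_append hm hm', hms.append hms'⟩

private lemma higmanLE_of_sublist {Λ : Type*} [PartialOrder Λ] {u w x : List Λ}
    (hs : List.Sublist u w) (h : HigmanLE w x) : HigmanLE u x := by
  unfold HigmanLE at *
  exact _root_.trans (hs.sublistForall₂ (Rₐ := (· ≤ ·))) h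

private lemma higmanLE_split {Λ : Type*} [PartialOrder Λ] {w x y : List Λ}
    (h : HigmanLE w (x ++ y)) :
    ∃ n, HigmanLE (w.take n) x ∧ HigmanLE (w.drop n) y := by
  rw [HigmanLE, List.sublistForall₂_iff] at h
  obtain ⟨l, hf, hs⟩ := h
  rw [List.sublist_append_iff] at hs
  obtain ⟨l₁, l₂, rfl, hs₁, hs₂⟩ := hs
  refine ⟨l₁.length, ?_, ?_⟩
  · rw [HigmanLE, List.sublistForall₂_iff]
    exact ⟨l₁, List.forall₂_take_append _ _ _ hf, hs₁⟩
  · rw [HigmanLE, List.sublistForall₂_iff]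
    exact ⟨l₂, List.forall₂_drop_append _ _ _ hf, hs₂⟩

/-- `(XY)^∇ = X^∇ Y^∇` for all subsets `X, Y` of `Λ*`. -/
theorem lowerCone_concat {Λ : Type*} [PartialOrder Λ] (X Y : Set (List Λ)) :
    lowerCone (concatSet X Y) = concatSet (lowerCone X) (lowerCone Y) := by
  ext w
  constructor
  · intro hw
    classical
    by_cases hX : X.Nonempty
    swap
    · refine ⟨w, fun x hx => absurd ⟨x, hx⟩ hX, [], fun y _ => List.SublistForall₂.nil,
        (List.append_nil w).symm⟩
    by_cases hY : Y.Nonempty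
    swap
    · refine ⟨[], fun x _ => List.SublistForall₂.nil, w, fun y hy => absurd ⟨y, hy⟩ hY, rfl⟩
    obtain ⟨x₀, hx₀⟩ := hX
    obtain ⟨y₀, hy₀⟩ := hY
    have hP0 : ∀ x ∈ X, HigmanLE ((w.take 0 : List Λ)) x := fun x _ => by
      simpa [HigmanLE] using (List.SublistForall₂.nil : HigmanLE ([] : List Λ) x)
    set k := Nat.findGreatest (fun n => ∀ x ∈ X, HigmanLE (w.take n) x) w.length with hk
    have hPk : ∀ x ∈ X, HigmanLE (w.take k) x :=
      Nat.findGreatest_spec (P := fun n => ∀ x ∈ X, HigmanLE (w.take n) x)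
        (Nat.zero_le _) hP0
    refine ⟨w.take k, hPk, w.drop k, ?_, (List.take_append_drop k w).symm⟩
    intro y hy
    rcases eq_or_lt_of_le
        (Nat.findGreatest_le (P := fun n => ∀ x ∈ X, HigmanLE (w.take n) x) w.length)
      with heq | hlt
    · rw [hk, heq, List.drop_length]
      exact List.SublistForall₂.nil
    have hnP : ¬ ∀ x ∈ X, HigmanLE (w.take (k + 1)) x :=
      Nat.findGreatest_is_greatest (Nat.lt_succ_self _) hlt
    push_neg at hnP
    obtain ⟨x, hxX, hx⟩ := hnP
    have hwxy : HigmanLE w (x ++ y) := hw _ ⟨x, hxX, y, hy, rfl⟩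
    obtain ⟨n, hn₁, hn₂⟩ := higmanLE_split hwxy
    have hnk : n ≤ k := by
      by_contra hnk
      push_neg at hnk
      have : List.Sublist (w.take (k + 1)) (w.take n) := by
        have : w.take (k + 1) = (w.take n).take (k + 1) := by
          rw [List.take_take, min_eq_left hnk]
        rw [this]
        exact List.take_sublist _ _
      exact hx (higmanLE_of_sublist this hn₁)
    have : List.Sublist (w.drop k) (w.drop n) := by
      have : w.drop k = (w.drop n).drop (k - n) := by
        rw [List.drop_drop, Nat.add_sub_cancel' hnk]
      rw [this]
      exact List.drop_sublist _ _
    exact higmanLE_of_sublist this hn₂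
  · rintro ⟨u, hu, v, hv, rfl⟩ z ⟨x, hx, y, hy, rfl⟩
    exact higmanLE_append (hu x hx) (hv y hy)
end

section
/- For all nonempty subsets X and Y of Λ*, the MacNeille closure operators commute with elementwise concatenation: (XY)^{∇Δ} = X^{∇Δ} Y^{∇Δ} and (XY)^{Δ∇} = X^{Δ∇} Y^{Δ∇}. -/
/-! To factor a word `w ∈ (AB)^∇` as a prefix in `A^∇` times a suffix in `B^∇`, cut `w` at the
first position `k` whose suffix lies in `B^∇`. If `k = j + 1`, some `y₀ ∈ B` is not above
`w.drop j`; then for every `x ∈ A` any factorisation of `w ≤ x y₀` cuts `w` after position `j`,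
so `w.take k ≤ x`. Dually, a word in `(AB)^Δ` is cut at the first position whose prefix lies in
`A^Δ`. -/

theorem Nat.exists_and_of_not_imp_succ {P Q : ℕ → Prop} (hP : ∃ n, P n) (hQ₀ : Q 0)
    (hQ : ∀ j, ¬ P j → Q (j + 1)) : ∃ k, P k ∧ Q k := by
  classical
  refine ⟨Nat.find hP, Nat.find_spec hP, ?_⟩
  cases h : Nat.find hP with
  | zero => exact hQ₀
  | succ j => exact hQ j (Nat.find_min hP (by omega))

namespace HigmanLE

variable {Λ : Type*} [PartialOrder Λ] {u v w x y z : List Λ}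

theorem nil_left (l : List Λ) : HigmanLE [] l := .nil

theorem of_sublist (h : u.Sublist v) : HigmanLE u v := h.sublistForall₂

theorem trans (h₁ : HigmanLE u v) (h₂ : HigmanLE v w) : HigmanLE u w :=
  IsTrans.trans (r := List.SublistForall₂ (· ≤ · : Λ → Λ → Prop)) u v w h₁ h₂

theorem append (h₁ : HigmanLE u v) (h₂ : HigmanLE x y) : HigmanLE (u ++ x) (v ++ y) := by
  obtain ⟨l₁, hu, hl₁⟩ := List.sublistForall₂_iff.1 h₁
  obtain ⟨l₂, hx, hl₂⟩ := List.sublistForall₂_iff.1 h₂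
  exact List.sublistForall₂_iff.2 ⟨l₁ ++ l₂, List.rel_append hu hx, hl₁.append hl₂⟩

theorem exists_take_drop_of_le_append (h : HigmanLE w (x ++ y)) :
    ∃ n, HigmanLE (w.take n) x ∧ HigmanLE (w.drop n) y := by
  obtain ⟨l, hwl, hl⟩ := List.sublistForall₂_iff.1 h
  obtain ⟨l₁, l₂, rfl, hl₁, hl₂⟩ := List.sublist_append_iff.1 hl
  exact ⟨l₁.length, List.sublistForall₂_iff.2 ⟨l₁, List.forall₂_take_append _ _ _ hwl, hl₁⟩,
    List.sublistForall₂_iff.2 ⟨l₂, List.forall₂_drop_append _ _ _ hwl, hl₂⟩⟩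

theorem exists_take_drop_of_append_le (h : HigmanLE (x ++ y) z) :
    ∃ n, HigmanLE x (z.take n) ∧ HigmanLE y (z.drop n) := by
  obtain ⟨l, hxyl, hl⟩ := List.sublistForall₂_iff.1 h
  have hx := List.forall₂_take x.length hxyl
  have hy := List.forall₂_drop x.length hxyl
  rw [List.take_left] at hx
  rw [List.drop_left] at hy
  rw [← List.take_append_drop x.length l] at hl
  obtain ⟨z₁, z₂, rfl, hz₁, hz₂⟩ := List.append_sublist_iff.1 hl
  refine ⟨z₁.length, ?_, ?_⟩
  · rw [List.take_left]; exact List.sublistForall₂_iff.2 ⟨_, hx, hz₁⟩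
  · rw [List.drop_left]; exact List.sublistForall₂_iff.2 ⟨_, hy, hz₂⟩

end HigmanLE

section Cones

variable {Λ : Type*} [PartialOrder Λ]

theorem lowerCone_nonempty (A : Set (List Λ)) : (lowerCone A).Nonempty :=
  ⟨[], fun x _ => HigmanLE.nil_left x⟩

theorem concatSet_lowerCone_subset (A B : Set (List Λ)) :
    concatSet (lowerCone A) (lowerCone B) ⊆ lowerCone (concatSet A B) := by
  rintro _ ⟨u, hu, v, hv, rfl⟩ _ ⟨x, hx, y, hy, rfl⟩
  exact (hu x hx).append (hv y hy)

theorem concatSet_upperCone_subset (A B : Set (List Λ)) :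
    concatSet (upperCone A) (upperCone B) ⊆ upperCone (concatSet A B) := by
  rintro _ ⟨u, hu, v, hv, rfl⟩ _ ⟨x, hx, y, hy, rfl⟩
  exact (hu x hx).append (hv y hy)

theorem lowerCone_concatSet (A B : Set (List Λ)) :
    lowerCone (concatSet A B) = concatSet (lowerCone A) (lowerCone B) := by
  refine Set.Subset.antisymm (fun w hw => ?_) (concatSet_lowerCone_subset A B)
  have succ_mem : ∀ j, w.drop j ∉ lowerCone B → w.take (j + 1) ∈ lowerCone A := by
    intro j hj x hx
    obtain ⟨y₀, hy₀, hjy₀⟩ : ∃ y₀ ∈ B, ¬ HigmanLE (w.drop j) y₀ := by simpa [lowerCone] using hj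
    obtain ⟨n, hn₁, hn₂⟩ := HigmanLE.exists_take_drop_of_le_append (hw _ ⟨x, hx, y₀, hy₀, rfl⟩)
    have hjn : j < n := by
      by_contra! hnj
      exact hjy₀ ((HigmanLE.of_sublist (List.drop_sublist_drop_left w hnj)).trans hn₂)
    exact (HigmanLE.of_sublist (List.take_sublist_take_left hjn)).trans hn₁
  obtain ⟨k, hsuffix, hprefix⟩ := Nat.exists_and_of_not_imp_succ
    (P := fun k => w.drop k ∈ lowerCone B) (Q := fun k => w.take k ∈ lowerCone A)
    ⟨w.length, fun y _ => by simpa using HigmanLE.nil_left y⟩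
    (fun x _ => by simpa using HigmanLE.nil_left x) succ_mem
  exact ⟨_, hprefix, _, hsuffix, (List.take_append_drop k w).symm⟩

theorem upperCone_concatSet {A B : Set (List Λ)} (hA : A.Nonempty) (hB : B.Nonempty) :
    upperCone (concatSet A B) = concatSet (upperCone A) (upperCone B) := by
  refine Set.Subset.antisymm (fun z hz => ?_) (concatSet_upperCone_subset A B)
  obtain ⟨x₀, hx₀⟩ := hA
  obtain ⟨y₀, hy₀⟩ := hB
  have succ_mem : ∀ j, z.take j ∉ upperCone A → z.drop (j + 1) ∈ upperCone B := by
    intro j hj y hy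
    obtain ⟨x₁, hx₁, hx₁j⟩ : ∃ x₁ ∈ A, ¬ HigmanLE x₁ (z.take j) := by simpa [upperCone] using hj
    obtain ⟨n, hn₁, hn₂⟩ := HigmanLE.exists_take_drop_of_append_le (hz _ ⟨x₁, hx₁, y, hy, rfl⟩)
    have hjn : j < n := by
      by_contra! hnj
      exact hx₁j (hn₁.trans (HigmanLE.of_sublist (List.take_sublist_take_left hnj)))
    exact hn₂.trans (HigmanLE.of_sublist (List.drop_sublist_drop_left z hjn))
  have hA_le : z ∈ upperCone A := fun x hx =>
    (HigmanLE.of_sublist (List.sublist_append_left x y₀)).trans (hz _ ⟨x, hx, y₀, hy₀, rfl⟩)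
  have hB_le : z ∈ upperCone B := fun y hy =>
    (HigmanLE.of_sublist (List.sublist_append_right x₀ y)).trans (hz _ ⟨x₀, hx₀, y, hy, rfl⟩)
  obtain ⟨k, hprefix, hsuffix⟩ := Nat.exists_and_of_not_imp_succ
    (P := fun k => z.take k ∈ upperCone A) (Q := fun k => z.drop k ∈ upperCone B)
    ⟨z.length, by simpa using hA_le⟩ (by simpa using hB_le) succ_mem
  exact ⟨_, hprefix, _, hsuffix, (List.take_append_drop k z).symm⟩

end Cones

/-- `(XY)^{∇Δ} = X^{∇Δ} Y^{∇Δ}` and `(XY)^{Δ∇} = X^{Δ∇} Y^{Δ∇}`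
for all nonempty subsets `X, Y` of `Λ*`. -/
theorem closure_concat {Λ : Type*} [PartialOrder Λ] (X Y : Set (List Λ))
    (hX : X.Nonempty) (hY : Y.Nonempty) :
    upperCone (lowerCone (concatSet X Y)) =
      concatSet (upperCone (lowerCone X)) (upperCone (lowerCone Y)) ∧
    lowerCone (upperCone (concatSet X Y)) =
      concatSet (lowerCone (upperCone X)) (lowerCone (upperCone Y)) := by
  constructor
  · rw [lowerCone_concatSet, upperCone_concatSet (lowerCone_nonempty X) (lowerCone_nonempty Y)]
  · rw [upperCone_concatSet hX hY, lowerCone_concatSet]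
end

section
/- Let Y and Z_i (i ∈ I, with I nonempty) be closed upper sets of Λ*. Then elementwise concatenation distributes over arbitrary intersections of closed upper sets: Y(⋂_{i∈I} Z_i) = ⋂_{i∈I} YZ_i and (⋂_{i∈I} Z_i)Y = ⋂_{i∈I} Z_iY. -/
section WordSets

variable {Λ : Type*}

theorem ClosedUpper.isUpperWordSet [PartialOrder Λ] {Z : Set (List Λ)} (hZ : ClosedUpper Z) :
    IsUpperWordSet Z := by
  intro x y hxy hx
  rw [hZ] at hx ⊢
  exact fun a ha => _root_.trans (r := List.SublistForall₂ (· ≤ ·)) (hx a ha) hxy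

namespace IsUpperWordSet

variable [PartialOrder Λ] {Z : Set (List Λ)}

theorem mem_of_sublist (hZ : IsUpperWordSet Z) {x y : List Λ} (hxy : x.Sublist y) (hx : x ∈ Z) :
    y ∈ Z :=
  hZ x y hxy.sublistForall₂ hx

theorem drop_mem_of_le (hZ : IsUpperWordSet Z) {w : List Λ} {m n : ℕ} (hmn : m ≤ n)
    (hn : w.drop n ∈ Z) : w.drop m ∈ Z :=
  hZ.mem_of_sublist (w.drop_sublist_drop_left hmn) hn

theorem take_mem_of_le (hZ : IsUpperWordSet Z) {w : List Λ} {m n : ℕ} (hmn : m ≤ n)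
    (hm : w.take m ∈ Z) : w.take n ∈ Z :=
  hZ.mem_of_sublist (List.take_prefix_take_left hmn).sublist hm

end IsUpperWordSet

variable {I : Type*} {X Y : Set (List Λ)} {w : List Λ}

theorem mem_concatSet_iff_take_drop :
    w ∈ concatSet X Y ↔ ∃ n ≤ w.length, w.take n ∈ X ∧ w.drop n ∈ Y := by
  constructor
  · rintro ⟨x, hx, y, hy, rfl⟩
    exact ⟨x.length, by simp, by rwa [List.take_left], by rwa [List.drop_left]⟩
  · rintro ⟨n, -, hX, hY⟩
    exact ⟨_, hX, _, hY, (List.take_append_drop n w).symm⟩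

theorem concatSet_iInter_subset (Z : I → Set (List Λ)) :
    concatSet Y (⋂ i, Z i) ⊆ ⋂ i, concatSet Y (Z i) := by
  rintro _ ⟨x, hx, y, hy, rfl⟩
  exact Set.mem_iInter.2 fun i => ⟨x, hx, y, Set.mem_iInter.1 hy i, rfl⟩

theorem iInter_concatSet_subset (Z : I → Set (List Λ)) :
    concatSet (⋂ i, Z i) Y ⊆ ⋂ i, concatSet (Z i) Y := by
  rintro _ ⟨x, hx, y, hy, rfl⟩
  exact Set.mem_iInter.2 fun i => ⟨x, Set.mem_iInter.1 hx i, y, hy, rfl⟩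

variable [PartialOrder Λ] [Nonempty I]

theorem concatSet_iInter {Z : I → Set (List Λ)}
    (hZ : ∀ i, IsUpperWordSet (Z i)) : concatSet Y (⋂ i, Z i) = ⋂ i, concatSet Y (Z i) := by
  refine (concatSet_iInter_subset Z).antisymm fun w hw => ?_
  simp only [Set.mem_iInter, mem_concatSet_iff_take_drop] at hw
  choose k hk hkY hkZ using hw
  obtain ⟨_, ⟨i₀, rfl⟩, hleast⟩ :=
    (OrderBot.bddBelow (Set.range k)).exists_isLeast_of_nonempty (Set.range_nonempty k)
  exact mem_concatSet_iff_take_drop.2 ⟨k i₀, hk i₀, hkY i₀,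
    Set.mem_iInter.2 fun i => (hZ i).drop_mem_of_le (hleast ⟨i, rfl⟩) (hkZ i)⟩

theorem iInter_concatSet {Z : I → Set (List Λ)}
    (hZ : ∀ i, IsUpperWordSet (Z i)) : concatSet (⋂ i, Z i) Y = ⋂ i, concatSet (Z i) Y := by
  refine (iInter_concatSet_subset Z).antisymm fun w hw => ?_
  simp only [Set.mem_iInter, mem_concatSet_iff_take_drop] at hw
  choose k hk hkZ hkY using hw
  have hbdd : BddAbove (Set.range k) := ⟨w.length, by rintro _ ⟨i, rfl⟩; exact hk i⟩
  obtain ⟨_, ⟨i₀, rfl⟩, hgreatest⟩ := hbdd.exists_isGreatest_of_nonempty (Set.range_nonempty k)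
  exact mem_concatSet_iff_take_drop.2 ⟨k i₀, hk i₀,
    Set.mem_iInter.2 fun i => (hZ i).take_mem_of_le (hgreatest ⟨i, rfl⟩) (hkZ i), hkY i₀⟩

end WordSets

theorem concat_distrib_iInter_general {Λ : Type*} [PartialOrder Λ] {I : Type*} [Nonempty I]
    (Y : Set (List Λ)) (Z : I → Set (List Λ))
    (hZ : ∀ i, ClosedUpper (Z i)) :
    concatSet Y (⋂ i, Z i) = ⋂ i, concatSet Y (Z i) ∧
    concatSet (⋂ i, Z i) Y = ⋂ i, concatSet (Z i) Y :=
  have hZ' : ∀ i, IsUpperWordSet (Z i) := fun i => (hZ i).isUpperWordSet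
  ⟨concatSet_iInter hZ', iInter_concatSet hZ'⟩

/-- concatenation with a closed upper set distributes over arbitrary
intersections of closed upper sets (nonempty index set). -/
theorem concat_distrib_iInter {Λ : Type*} [PartialOrder Λ] {I : Type*} [Nonempty I]
    (Y : Set (List Λ)) (Z : I → Set (List Λ))
    (hY : ClosedUpper Y) (hZ : ∀ i, ClosedUpper (Z i)) :
    concatSet Y (⋂ i, Z i) = ⋂ i, concatSet Y (Z i) ∧
    concatSet (⋂ i, Z i) Y = ⋂ i, concatSet (Z i) Y :=
  concat_distrib_iInter_general Y Z hZ
end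

section
/- Let Y and Z_i (i ∈ I, with I nonempty) be closed upper sets of Λ*. Then elementwise concatenation distributes over closed unions: Y(⨆_{i∈I} Z_i) = ⨆_{i∈I} YZ_i and (⨆_{i∈I} Z_i)Y = ⨆_{i∈I} Z_iY, where ⨆ denotes the closed union. -/
section HigmanAux

variable {Λ : Type*} [PartialOrder Λ]

lemma higman_nil (l : List Λ) : HigmanLE [] l := List.SublistForall₂.nil

lemma higman_trans {x y z : List Λ} (h1 : HigmanLE x y) (h2 : HigmanLE y z) :
    HigmanLE x z := by
  unfold HigmanLE at *
  induction h2 generalizing x with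
  | nil => cases h1; exact .nil
  | cons hab h ih =>
      cases h1 with
      | nil => exact .nil
      | cons hca h' => exact .cons (le_trans hca hab) (ih h')
      | cons_right h' => exact .cons_right (ih h')
  | cons_right h ih => exact .cons_right (ih h1)

lemma higman_of_sublist {x y : List Λ} (h : List.Sublist x y) : HigmanLE x y := by
  unfold HigmanLE
  induction h with
  | slnil => exact .nil
  | cons a _ ih => exact .cons_right ih
  | cons_cons a _ ih => exact .cons le_rfl ih

lemma higman_append_right {x z : List Λ} (l : List Λ) (h : HigmanLE x z) :
    HigmanLE x (l ++ z) := by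
  unfold HigmanLE at *
  induction l with
  | nil => exact h
  | cons a l ih => exact .cons_right ih

lemma higman_append {a b y z : List Λ} (h1 : HigmanLE a y) (h2 : HigmanLE b z) :
    HigmanLE (a ++ b) (y ++ z) := by
  unfold HigmanLE at *
  induction h1 with
  | nil => exact higman_append_right _ h2
  | cons hab h ih => exact .cons hab ih
  | cons_right h ih => exact .cons_right ih

lemma higman_split_left {u v : List Λ} (h : HigmanLE u v) :
    ∀ a b : List Λ, u = a ++ b →
      ∃ j, HigmanLE a (v.take j) ∧ HigmanLE b (v.drop j) := by
  unfold HigmanLE at h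
  induction h with
  | nil =>
      rintro a b hab
      obtain ⟨rfl, rfl⟩ := List.append_eq_nil_iff.mp hab.symm
      exact ⟨0, higman_nil _, higman_nil _⟩
  | @cons c d u' v' hcd h ih =>
      rintro a b hab
      cases a with
      | nil =>
          refine ⟨0, higman_nil _, ?_⟩
          simp only [List.nil_append] at hab
          rw [← hab]
          exact List.SublistForall₂.cons hcd h
      | cons c' a' =>
          simp only [List.cons_append, List.cons.injEq] at hab
          obtain ⟨rfl, hab⟩ := hab
          obtain ⟨j, h1, h2⟩ := ih a' b hab
          exact ⟨j + 1, List.SublistForall₂.cons hcd h1, h2⟩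
  | @cons_right u' d v' h ih =>
      rintro a b rfl
      obtain ⟨j, h1, h2⟩ := ih a b rfl
      exact ⟨j + 1, List.SublistForall₂.cons_right h1, h2⟩

lemma higman_split_right {u y z : List Λ} (h : HigmanLE u (y ++ z)) :
    ∃ k, HigmanLE (u.take k) y ∧ HigmanLE (u.drop k) z := by
  induction y generalizing u with
  | nil => exact ⟨0, higman_nil _, h⟩
  | cons d y' ih =>
      unfold HigmanLE at h
      cases h with
      | nil => exact ⟨0, higman_nil _, higman_nil _⟩
      | cons hcd h' =>
          obtain ⟨k, h1, h2⟩ := ih h'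
          exact ⟨k + 1, List.SublistForall₂.cons hcd h1, h2⟩
      | cons_right h' =>
          obtain ⟨k, h1, h2⟩ := ih h'
          exact ⟨k, List.SublistForall₂.cons_right h1, h2⟩

lemma take_sublist_take {v : List Λ} {k j : ℕ} (h : k ≤ j) : List.Sublist (v.take k) (v.take j) := by
  have : v.take k = (v.take j).take k := by
    rw [List.take_take, min_eq_left h]
  rw [this]
  exact List.take_sublist _ _

lemma drop_sublist_drop {v : List Λ} {k j : ℕ} (h : k ≤ j) : List.Sublist (v.drop j) (v.drop k) := by
  have : v.drop j = (v.drop k).drop (j - k) := by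
    rw [List.drop_drop]
    congr 1
    omega
  rw [this]
  exact List.drop_sublist _ _

lemma nil_mem_lowerCone (X : Set (List Λ)) : ([] : List Λ) ∈ lowerCone X :=
  fun x _ => higman_nil x

lemma subset_cl (X : Set (List Λ)) : X ⊆ upperCone (lowerCone X) :=
  fun x hx u hu => hu x hx

lemma lowerCone_cl (X : Set (List Λ)) :
    lowerCone (upperCone (lowerCone X)) = lowerCone X := by
  apply Set.Subset.antisymm
  · intro u hu x hx
    exact hu x (subset_cl X hx)
  · intro u hu w hw
    exact hw u hu

lemma cl_mono {X X' : Set (List Λ)} (h : X ⊆ X') :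
    upperCone (lowerCone X) ⊆ upperCone (lowerCone X') := by
  intro w hw u hu
  exact hw u (fun x hx => hu x (h hx))

lemma cl_closed (X : Set (List Λ)) : ClosedUpper (upperCone (lowerCone X)) := by
  unfold ClosedUpper
  rw [lowerCone_cl]

lemma exists_lower_not_le {Z : Set (List Λ)} (hZ : ClosedUpper Z) {x : List Λ}
    (hx : x ∉ Z) : ∃ a ∈ lowerCone Z, ¬ HigmanLE a x := by
  rw [hZ] at hx
  simp only [upperCone, Set.mem_setOf_eq, not_forall] at hx
  obtain ⟨a, ha, hax⟩ := hx
  exact ⟨a, ha, hax⟩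

/-- Core lemma: the product of two closed upper sets is closed. -/
lemma prod_closed {Y W : Set (List Λ)} (hY : ClosedUpper Y) (hW : ClosedUpper W) :
    upperCone (lowerCone (concatSet Y W)) ⊆ concatSet Y W := by
  classical
  intro v hv
  by_contra hcon
  have h : ∀ k, v.take k ∉ Y ∨ v.drop k ∉ W := by
    intro k
    by_contra hk
    push_neg at hk
    exact hcon ⟨_, hk.1, _, hk.2, (List.take_append_drop k v).symm⟩
  obtain ⟨a, b, ha, hb, hnot⟩ :
      ∃ a b : List Λ, a ∈ lowerCone Y ∧ b ∈ lowerCone W ∧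
        ∀ j, ¬ (HigmanLE a (v.take j) ∧ HigmanLE b (v.drop j)) := by
    by_cases hex : ∃ k, v.take k ∈ Y
    · set k0 := Nat.find hex with hk0def
      have hk0 : v.take k0 ∈ Y := Nat.find_spec hex
      have hdW : v.drop k0 ∉ W := (h k0).resolve_left (not_not_intro hk0)
      obtain ⟨b, hb, hbn⟩ := exists_lower_not_le hW hdW
      cases hk0eq : k0 with
      | zero =>
          refine ⟨[], b, nil_mem_lowerCone _, hb, ?_⟩
          rintro j ⟨-, hbj⟩
          exact hbn (by
            rw [hk0eq]
            exact higman_trans hbj (higman_of_sublist (drop_sublist_drop (Nat.zero_le j))))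
      | succ m =>
          have hm : v.take m ∉ Y := Nat.find_min hex (by omega)
          obtain ⟨a, ha, han⟩ := exists_lower_not_le hY hm
          refine ⟨a, b, ha, hb, ?_⟩
          rintro j ⟨haj, hbj⟩
          rcases le_or_gt j m with hjm | hjm
          · exact han (higman_trans haj (higman_of_sublist (take_sublist_take hjm)))
          · have : k0 ≤ j := by omega
            exact hbn (higman_trans hbj (higman_of_sublist (drop_sublist_drop this)))
    · push_neg at hex
      have hv' : v ∉ Y := by
        have := hex v.length
        rwa [List.take_length] at this
      obtain ⟨a, ha, han⟩ := exists_lower_not_le hY hv'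
      refine ⟨a, [], ha, nil_mem_lowerCone _, ?_⟩
      rintro j ⟨haj, -⟩
      exact han (higman_trans haj (higman_of_sublist (List.take_sublist _ _)))
  have hab : a ++ b ∈ lowerCone (concatSet Y W) := by
    rintro w ⟨y, hy, w', hw', rfl⟩
    exact higman_append (ha y hy) (hb w' hw')
  obtain ⟨j, hj1, hj2⟩ := higman_split_left (hv _ hab) a b rfl
  exact hnot j ⟨hj1, hj2⟩

lemma concat_mono_right {Y S S' : Set (List Λ)} (h : S ⊆ S') :
    concatSet Y S ⊆ concatSet Y S' := by
  rintro v ⟨y, hy, s, hs, rfl⟩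
  exact ⟨y, hy, s, h hs, rfl⟩

lemma concat_mono_left {Y S S' : Set (List Λ)} (h : S ⊆ S') :
    concatSet S Y ⊆ concatSet S' Y := by
  rintro v ⟨s, hs, y, hy, rfl⟩
  exact ⟨s, h hs, y, hy, rfl⟩

lemma left_sub (Y S : Set (List Λ)) :
    concatSet Y (upperCone (lowerCone S)) ⊆ upperCone (lowerCone (concatSet Y S)) := by
  classical
  rintro v ⟨y, hy, w, hw, rfl⟩ u hu
  set P : ℕ → Prop := fun k => HigmanLE (u.take k) y with hP
  have h0 : P 0 := by simpa [hP] using higman_nil y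
  have hPdec : DecidablePred P := fun k => Classical.dec _
  set k := Nat.findGreatest P u.length with hk
  have hPk : P k := Nat.findGreatest_spec (Nat.zero_le _) h0
  have hdrop : u.drop k ∈ lowerCone S := by
    intro z hz
    have huyz : HigmanLE u (y ++ z) := hu (y ++ z) ⟨y, hy, z, hz, rfl⟩
    obtain ⟨j, hj1, hj2⟩ := higman_split_right huyz
    rcases le_total j u.length with hjlen | hjlen
    · have hjk : j ≤ k := Nat.le_findGreatest hjlen hj1
      exact higman_trans (higman_of_sublist (drop_sublist_drop hjk)) hj2
    · have huy : P u.length := by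
        have : u.take j = u := List.take_of_length_le hjlen
        have : HigmanLE u y := by rwa [this] at hj1
        simpa [hP, List.take_length] using this
      have hklen : u.length ≤ k := Nat.le_findGreatest le_rfl huy
      have : u.drop k = [] := List.drop_eq_nil_of_le hklen
      rw [this]
      exact higman_nil z
  have hw' : HigmanLE (u.drop k) w := hw _ hdrop
  have := higman_append hPk hw'
  rwa [List.take_append_drop] at this

lemma right_sub (Y S : Set (List Λ)) :
    concatSet (upperCone (lowerCone S)) Y ⊆ upperCone (lowerCone (concatSet S Y)) := by
  classical
  rintro v ⟨w, hw, y, hy, rfl⟩ u hu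
  have hex : ∃ k, HigmanLE (u.drop k) y :=
    ⟨u.length, by simpa [List.drop_length] using higman_nil y⟩
  set k := Nat.find hex with hk
  have hPk : HigmanLE (u.drop k) y := Nat.find_spec hex
  have htake : u.take k ∈ lowerCone S := by
    intro z hz
    have huzy : HigmanLE u (z ++ y) := hu _ ⟨z, hz, y, hy, rfl⟩
    obtain ⟨j, hj1, hj2⟩ := higman_split_right huzy
    have hkj : k ≤ j := Nat.find_min' hex hj2
    exact higman_trans (higman_of_sublist (take_sublist_take hkj)) hj1
  have h1 : HigmanLE (u.take k) w := hw _ htake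
  have := higman_append h1 hPk
  rwa [List.take_append_drop] at this

lemma concat_iUnion_right {I : Type*} (Y : Set (List Λ)) (Z : I → Set (List Λ)) :
    concatSet Y (⋃ i, Z i) = ⋃ i, concatSet Y (Z i) := by
  ext v
  constructor
  · rintro ⟨y, hy, z, hz, rfl⟩
    obtain ⟨i, hi⟩ := Set.mem_iUnion.mp hz
    exact Set.mem_iUnion.mpr ⟨i, y, hy, z, hi, rfl⟩
  · intro hv
    obtain ⟨i, y, hy, z, hz, rfl⟩ := Set.mem_iUnion.mp hv
    exact ⟨y, hy, z, Set.mem_iUnion.mpr ⟨i, hz⟩, rfl⟩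

lemma concat_iUnion_left {I : Type*} (Y : Set (List Λ)) (Z : I → Set (List Λ)) :
    concatSet (⋃ i, Z i) Y = ⋃ i, concatSet (Z i) Y := by
  ext v
  constructor
  · rintro ⟨z, hz, y, hy, rfl⟩
    obtain ⟨i, hi⟩ := Set.mem_iUnion.mp hz
    exact Set.mem_iUnion.mpr ⟨i, z, hi, y, hy, rfl⟩
  · intro hv
    obtain ⟨i, z, hz, y, hy, rfl⟩ := Set.mem_iUnion.mp hv
    exact ⟨z, Set.mem_iUnion.mpr ⟨i, hz⟩, y, hy, rfl⟩

end HigmanAux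

/-- concatenation with a closed upper set distributes over closed unions
`⨆ Z_i = (⋃ Z_i)^{∇Δ}` (nonempty index set). -/
theorem concat_distrib_closedUnion {Λ : Type*} [PartialOrder Λ] {I : Type*} [Nonempty I]
    (Y : Set (List Λ)) (Z : I → Set (List Λ))
    (hY : ClosedUpper Y) (hZ : ∀ i, ClosedUpper (Z i)) :
    concatSet Y (upperCone (lowerCone (⋃ i, Z i))) =
      upperCone (lowerCone (⋃ i, concatSet Y (Z i))) ∧
    concatSet (upperCone (lowerCone (⋃ i, Z i))) Y =
      upperCone (lowerCone (⋃ i, concatSet (Z i) Y)) := by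
  constructor
  · apply Set.Subset.antisymm
    · have := left_sub Y (⋃ i, Z i)
      rwa [concat_iUnion_right] at this
    · have hsub : (⋃ i, concatSet Y (Z i)) ⊆
          concatSet Y (upperCone (lowerCone (⋃ i, Z i))) := by
        apply Set.iUnion_subset
        intro i
        exact concat_mono_right (fun z hz => subset_cl _ (Set.mem_iUnion.mpr ⟨i, hz⟩))
      calc upperCone (lowerCone (⋃ i, concatSet Y (Z i)))
          ⊆ upperCone (lowerCone (concatSet Y (upperCone (lowerCone (⋃ i, Z i))))) :=
            cl_mono hsub
        _ ⊆ concatSet Y (upperCone (lowerCone (⋃ i, Z i))) :=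
            prod_closed hY (cl_closed _)
  · apply Set.Subset.antisymm
    · have := right_sub Y (⋃ i, Z i)
      rwa [concat_iUnion_left] at this
    · have hsub : (⋃ i, concatSet (Z i) Y) ⊆
          concatSet (upperCone (lowerCone (⋃ i, Z i))) Y := by
        apply Set.iUnion_subset
        intro i
        exact concat_mono_left (fun z hz => subset_cl _ (Set.mem_iUnion.mpr ⟨i, hz⟩))
      calc upperCone (lowerCone (⋃ i, concatSet (Z i) Y))
          ⊆ upperCone (lowerCone (concatSet (upperCone (lowerCone (⋃ i, Z i))) Y)) :=
            cl_mono hsub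
        _ ⊆ concatSet (upperCone (lowerCone (⋃ i, Z i))) Y :=
            prod_closed (cl_closed _) hY
end

section
/- If Λ is well-founded and the intersection of any two principal lower sets of Λ is a finitely generated lower set, then every MacNeille closed lower set of Λ* other than Λ* itself is a finitely generated lower set of Λ*; consequently the MacNeille completion of Λ* is well-founded. -/
namespace HigmanAux

open Relation

/-! ### Generic well-foundedness tools -/

theorem noDesc_of_wf {α : Type*} {r : α → α → Prop} (wf : WellFounded r) :
    ¬ ∃ g : ℕ → α, ∀ n, r (g (n + 1)) (g n) := by
  rintro ⟨g, hg⟩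
  obtain ⟨m, ⟨N, rfl⟩, hmin⟩ := wf.has_min (Set.range g) ⟨g 0, 0, rfl⟩
  exact hmin (g (N + 1)) ⟨N + 1, rfl⟩ (hg N)

theorem wf_of_noDesc {α : Type*} {r : α → α → Prop} [IsStrictOrder α r]
    (h : ¬ ∃ g : ℕ → α, ∀ n, r (g (n + 1)) (g n)) : WellFounded r :=
  RelEmbedding.wellFounded_iff_isEmpty.mpr
    ⟨fun emb => h ⟨emb, fun n => emb.map_rel_iff.2 (Nat.lt_succ_self n)⟩⟩

/-- A weakly decreasing sequence in a well-founded partial order is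
eventually constant. -/
theorem eventually_const {P : Type*} [PartialOrder P]
    (wf : WellFounded ((· < ·) : P → P → Prop))
    (h : ℕ → P) (mono : ∀ n, h (n + 1) ≤ h n) :
    ∃ N, ∀ n, h (N + n) = h N := by
  obtain ⟨m, ⟨N, rfl⟩, hmin⟩ := wf.has_min (Set.range h) ⟨h 0, 0, rfl⟩
  refine ⟨N, fun n => ?_⟩
  have hle : ∀ n, h (N + n) ≤ h N := by
    intro n
    induction n with
    | zero => exact le_rfl
    | succ k ih => exact le_trans (mono (N + k)) ih
  have hnlt := hmin (h (N + n)) ⟨N + n, rfl⟩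
  exact ((hle n).lt_or_eq.resolve_left hnlt)

/-! ### The one-step Dershowitz–Manna relation and its well-foundedness -/

variable {P : Type*} [PartialOrder P]

/-- One-step Dershowitz–Manna relation: replace one element by finitely many
strictly smaller ones. -/
def DMStep (N M : Multiset P) : Prop :=
  ∃ (M' : Multiset P) (a : P) (K : Multiset P),
    M = a ::ₘ M' ∧ N = K + M' ∧ ∀ b ∈ K, b < a

theorem acc_add {a : P}
    (iha : ∀ b : P, b < a → ∀ M : Multiset P, Acc DMStep M → Acc DMStep (b ::ₘ M)) :
    ∀ K : Multiset P, (∀ b ∈ K, b < a) →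
      ∀ M : Multiset P, Acc DMStep M → Acc DMStep (K + M) := by
  intro K
  induction K using Multiset.induction with
  | empty => intro _ M hM; simpa using hM
  | cons b K ih =>
    intro hbK M hM
    rw [Multiset.cons_add]
    exact iha b (hbK b (Multiset.mem_cons_self b K)) _
      (ih (fun c hc => hbK c (Multiset.mem_cons_of_mem hc)) M hM)

theorem acc_cons (wf : WellFounded ((· < ·) : P → P → Prop)) :
    ∀ a : P, ∀ M : Multiset P, Acc DMStep M → Acc DMStep (a ::ₘ M) := by
  intro a
  refine wf.induction
    (C := fun a => ∀ M : Multiset P, Acc DMStep M → Acc DMStep (a ::ₘ M)) a ?_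
  intro a iha M hM
  induction hM with
  | intro M hMacc ihM =>
    constructor
    intro N hN
    obtain ⟨M', c, K, hM1, hN1, hK⟩ := hN
    rcases Multiset.cons_eq_cons.mp hM1 with ⟨hac, hMM'⟩ | ⟨_, u, hMu, hM'u⟩
    · subst hac
      rw [hN1, ← hMM']
      exact acc_add iha K hK M (Acc.intro M hMacc)
    · have hstep : DMStep (K + u) M := ⟨u, c, K, hMu, rfl, hK⟩
      have := ihM (K + u) hstep
      rw [hN1, hM'u, Multiset.add_cons]
      exact this

theorem dm_wf (wf : WellFounded ((· < ·) : P → P → Prop)) :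
    WellFounded (DMStep (P := P)) := by
  constructor
  intro M
  induction M using Multiset.induction with
  | empty =>
    constructor
    rintro N ⟨M', a, K, h, -, -⟩
    exact absurd h.symm (Multiset.cons_ne_zero)
  | cons a M ih => exact acc_cons wf a M ih

theorem dm_many :
    ∀ X : Multiset P, X ≠ 0 → ∀ (M' Y : Multiset P),
      (∀ y ∈ Y, ∃ x ∈ X, y < x) →
      TransGen (DMStep (P := P)) (M' + Y) (M' + X) := by
  classical
  intro X
  induction X using Multiset.induction with
  | empty => intro h; exact absurd rfl h
  | cons x X' ih =>
    intro _ M' Y hY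
    by_cases hX' : X' = (0 : Multiset P)
    · subst hX'
      refine TransGen.single ⟨M', x, Y, ?_, ?_, ?_⟩
      · rw [Multiset.add_cons, add_zero]
      · exact add_comm M' Y
      · intro b hb
        obtain ⟨x', hx', hlt⟩ := hY b hb
        rcases Multiset.mem_cons.mp hx' with rfl | hmem
        · exact hlt
        · exact absurd hmem (Multiset.notMem_zero x')
    · set p : P → Prop := fun y => ∃ x' ∈ X', y < x' with hp
      have hsplit : Y.filter p + Y.filter (fun y => ¬ p y) = Y := Multiset.filter_add_not p Y
      have h2 : ∀ y ∈ Y.filter p, ∃ x' ∈ X', y < x' := fun y hy =>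
        (Multiset.mem_filter.mp hy).2
      have h1 : ∀ b ∈ Y.filter (fun y => ¬ p y), b < x := by
        intro b hb
        obtain ⟨hbY, hnp⟩ := Multiset.mem_filter.mp hb
        obtain ⟨x', hx', hlt⟩ := hY b hbY
        rcases Multiset.mem_cons.mp hx' with rfl | hmem
        · exact hlt
        · exact absurd ⟨x', hmem, hlt⟩ hnp
      have step1 : DMStep ((M' + Y.filter (fun y => ¬ p y)) + X') (M' + (x ::ₘ X')) := by
        refine ⟨M' + X', x, Y.filter (fun y => ¬ p y), ?_, ?_, h1⟩
        · rw [Multiset.add_cons]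
        · simp only [add_assoc, add_comm, add_left_comm]
      have step2 : TransGen (DMStep (P := P))
          ((M' + Y.filter (fun y => ¬ p y)) + Y.filter p)
          ((M' + Y.filter (fun y => ¬ p y)) + X') := ih hX' _ _ h2
      have heq : (M' + Y.filter (fun y => ¬ p y)) + Y.filter p = M' + Y := by
        rw [add_assoc, add_comm (Y.filter (fun y => ¬ p y)) (Y.filter p), hsplit]
      rw [heq] at step2
      exact step2.tail step1

/-! ### The Hoare (domination) order on finite sets -/

/-- The lower set generated by a finite set. -/
def finLow (F : Finset P) : Set P := {x | ∃ w ∈ F, x ≤ w}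

/-- Maximal elements of a finite set. -/
noncomputable def maxels (F : Finset P) : Finset P :=
  letI := Classical.decPred (fun a : P => ∀ b ∈ F, ¬ a < b)
  F.filter (fun a => ∀ b ∈ F, ¬ a < b)

theorem mem_maxels {F : Finset P} {a : P} :
    a ∈ maxels F ↔ a ∈ F ∧ ∀ b ∈ F, ¬ a < b := by
  classical
  simp [maxels, Finset.mem_filter]

theorem exists_le_max (F : Finset P) {a : P} (ha : a ∈ F) :
    ∃ m ∈ maxels F, a ≤ m := by
  classical
  obtain ⟨m, hm, hmax⟩ := Finset.exists_maximal (s := F.filter (fun b => a ≤ b))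
    ⟨a, Finset.mem_filter.mpr ⟨ha, le_rfl⟩⟩
  obtain ⟨hmF, ham⟩ := Finset.mem_filter.mp hm
  refine ⟨m, mem_maxels.mpr ⟨hmF, fun b hb hlt => ?_⟩, ham⟩
  exact absurd (hmax (Finset.mem_filter.mpr ⟨hb, ham.trans hlt.le⟩) hlt.le) hlt.not_ge

theorem finLow_maxels (F : Finset P) : finLow (maxels F) = finLow F := by
  ext x
  constructor
  · rintro ⟨w, hw, hxw⟩
    exact ⟨w, (mem_maxels.mp hw).1, hxw⟩
  · rintro ⟨w, hw, hxw⟩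
    obtain ⟨m, hm, hwm⟩ := exists_le_max F hw
    exact ⟨m, hm, hxw.trans hwm⟩

theorem maxels_anti {F : Finset P} {a b : P} (ha : a ∈ maxels F) (hb : b ∈ maxels F)
    (hab : a ≤ b) : a = b := by
  rcases eq_or_lt_of_le hab with h | h
  · exact h
  · exact absurd h ((mem_maxels.mp ha).2 b (mem_maxels.mp hb).1)

theorem hoare_step {A B : Finset P}
    (hA : ∀ a ∈ A, ∀ b ∈ A, a ≤ b → a = b)
    (h : finLow A ⊂ finLow B) :
    TransGen (DMStep (P := P)) A.1 B.1 := by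
  classical
  have hsub : finLow A ⊆ finLow B := h.1
  have hd2 : Disjoint (A ∩ B) (A \ B) := (Finset.disjoint_sdiff_inter A B).symm
  have e2 : A.1 = (A ∩ B).1 + (A \ B).1 := by
    have h2 : (A ∩ B).disjUnion (A \ B) hd2 = A := by
      rw [Finset.disjUnion_eq_union, Finset.union_comm, Finset.sdiff_union_inter]
    calc A.1 = ((A ∩ B).disjUnion (A \ B) hd2).1 := by rw [h2]
    _ = (A ∩ B).1 + (A \ B).1 := rfl
  have hd1 : Disjoint (A ∩ B) (B \ A) := by
    rw [Finset.inter_comm]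
    exact (Finset.disjoint_sdiff_inter B A).symm
  have e1 : B.1 = (A ∩ B).1 + (B \ A).1 := by
    have h1 : (A ∩ B).disjUnion (B \ A) hd1 = B := by
      rw [Finset.disjUnion_eq_union, Finset.union_comm, Finset.inter_comm,
        Finset.sdiff_union_inter]
    calc B.1 = ((A ∩ B).disjUnion (B \ A) hd1).1 := by rw [h1]
    _ = (A ∩ B).1 + (B \ A).1 := rfl
  have hX : (B \ A).1 ≠ 0 := by
    obtain ⟨z, hzB, hzA⟩ := Set.exists_of_ssubset h
    obtain ⟨b, hbB, hzb⟩ := hzB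
    have hbA : b ∉ finLow A := fun ⟨w, hw, hbw⟩ => hzA ⟨w, hw, hzb.trans hbw⟩
    have hbnA : b ∉ A := fun hbA' => hbA ⟨b, hbA', le_rfl⟩
    intro h0
    have : b ∈ (B \ A).1 := Finset.mem_val.mpr (Finset.mem_sdiff.mpr ⟨hbB, hbnA⟩)
    rw [h0] at this
    exact Multiset.notMem_zero b this
  have hY : ∀ y ∈ (A \ B).1, ∃ x ∈ (B \ A).1, y < x := by
    intro y hy
    obtain ⟨hyA, hynB⟩ := Finset.mem_sdiff.mp (Finset.mem_val.mp hy)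
    obtain ⟨b, hbB, hyb⟩ := hsub ⟨y, hyA, le_rfl⟩
    have hne : y ≠ b := fun h => hynB (h ▸ hbB)
    have hlt : y < b := lt_of_le_of_ne hyb hne
    have hbnA : b ∉ A := fun hbA' => hne (hA y hyA b hbA' hyb)
    exact ⟨b, Finset.mem_val.mpr (Finset.mem_sdiff.mpr ⟨hbB, hbnA⟩), hlt⟩
  rw [e1, e2]
  exact dm_many (B \ A).1 hX (A ∩ B).1 (A \ B).1 hY

theorem hoare_wf (wf : WellFounded ((· < ·) : P → P → Prop)) :
    ¬ ∃ F : ℕ → Finset P, ∀ n, finLow (F (n + 1)) ⊂ finLow (F n) := by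
  rintro ⟨F, hF⟩
  refine noDesc_of_wf ((dm_wf wf).transGen) ⟨fun n => (maxels (F n)).1, fun n => ?_⟩
  refine hoare_step (fun a ha b hb hab => maxels_anti ha hb hab) ?_
  rw [finLow_maxels, finLow_maxels]
  exact hF n

/-! ### Basic facts about the Higman ordering -/

variable {Λ : Type*} [PartialOrder Λ]

theorem higmanLE_refl (x : List Λ) : HigmanLE x x := by
  induction x with
  | nil => exact List.SublistForall₂.nil
  | cons a t ih => exact List.SublistForall₂.cons le_rfl ih

theorem higmanLE_trans {x y z : List Λ} (h1 : HigmanLE x y) (h2 : HigmanLE y z) :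
    HigmanLE x z :=
  _root_.trans (r := List.SublistForall₂ ((· ≤ ·) : Λ → Λ → Prop)) h1 h2

theorem higmanLE_nil_right {x : List Λ} (h : HigmanLE x []) : x = [] := by
  cases h; rfl

theorem higmanLE_length {x y : List Λ} (h : HigmanLE x y) : x.length ≤ y.length := by
  obtain ⟨l, hf, hs⟩ := List.sublistForall₂_iff.mp h
  calc x.length = l.length := hf.length_eq
  _ ≤ y.length := hs.length_le

theorem higmanLE_forall₂ {x y : List Λ} (h : HigmanLE x y) (hl : y.length ≤ x.length) :
    List.Forall₂ (· ≤ ·) x y := by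
  obtain ⟨l, hf, hs⟩ := List.sublistForall₂_iff.mp h
  have hly : l = y :=
    hs.eq_of_length (le_antisymm hs.length_le (hl.trans (le_of_eq hf.length_eq)))
  rw [← hly]
  exact hf

theorem forall₂_le_antisymm : ∀ {x y : List Λ},
    List.Forall₂ (· ≤ ·) x y → List.Forall₂ (· ≤ ·) y x → x = y := by
  intro x y h1
  induction h1 with
  | nil => intro _; rfl
  | cons hab h ih =>
    intro h2
    cases h2 with
    | cons hba h2' => rw [le_antisymm hab hba, ih h2']

theorem higmanLE_antisymm {x y : List Λ} (h1 : HigmanLE x y) (h2 : HigmanLE y x) :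
    x = y :=
  forall₂_le_antisymm (higmanLE_forall₂ h1 (higmanLE_length h2))
    (higmanLE_forall₂ h2 (higmanLE_length h1))

/-- Type synonym for `List Λ` carrying the Higman partial order. -/
def HW (Λ : Type*) [PartialOrder Λ] := List Λ

instance : PartialOrder (HW Λ) where
  le x y := HigmanLE x y
  le_refl := higmanLE_refl
  le_trans _ _ _ := higmanLE_trans
  le_antisymm _ _ := higmanLE_antisymm

theorem hw_lt_iff {x y : HW Λ} : x < y ↔ HigmanLT x y := lt_iff_le_not_ge

/-! ### Well-foundedness of the Higman ordering -/

theorem fixedLen (hwf : NoInfiniteDescent (Λ := Λ)) :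
    ∀ k : ℕ, ¬ ∃ g : ℕ → List Λ, (∀ n, (g n).length = k) ∧
      (∀ n, List.Forall₂ (· ≤ ·) (g (n + 1)) (g n)) ∧ (∀ n, g (n + 1) ≠ g n) := by
  have wfΛ : WellFounded ((· < ·) : Λ → Λ → Prop) := wf_of_noDesc hwf
  intro k
  induction k with
  | zero =>
    rintro ⟨g, hlen, -, hne⟩
    have h0 : g 0 = [] := List.length_eq_zero_iff.mp (hlen 0)
    have h1 : g 1 = [] := List.length_eq_zero_iff.mp (hlen 1)
    exact hne 0 (h1.trans h0.symm)
  | succ k ih =>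
    rintro ⟨g, hlen, hmono, hne⟩
    have hne' : ∀ n, g n ≠ [] := by
      intro n h
      have := hlen n
      rw [h] at this
      simp at this
    have hcons : ∀ n, g n = (g n).head (hne' n) :: (g n).tail :=
      fun n => (List.cons_head_tail _).symm
    have hstep : ∀ n, (g (n + 1)).head (hne' (n + 1)) ≤ (g n).head (hne' n) ∧
        List.Forall₂ (· ≤ ·) (g (n + 1)).tail (g n).tail := by
      intro n
      have h := hmono n
      rw [hcons (n + 1), hcons n] at h
      exact ⟨(List.forall₂_cons.mp h).1, (List.forall₂_cons.mp h).2⟩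
    obtain ⟨N, hN⟩ := eventually_const wfΛ (fun n => (g n).head (hne' n))
      (fun n => (hstep n).1)
    apply ih
    refine ⟨fun n => (g (N + n)).tail, fun n => ?_, fun n => (hstep (N + n)).2,
      fun n => ?_⟩
    · rw [List.length_tail, hlen]
      rfl
    · intro heq
      apply hne (N + n)
      have hh : (g (N + (n + 1))).head (hne' (N + (n + 1)))
          = (g (N + n)).head (hne' (N + n)) := by
        rw [hN (n + 1), hN n]
      calc g (N + n + 1) = (g (N + n + 1)).head (hne' (N + n + 1)) :: (g (N + n + 1)).tail :=
            hcons (N + n + 1)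
        _ = (g (N + n)).head (hne' (N + n)) :: (g (N + n)).tail := by
            rw [show N + n + 1 = N + (n + 1) from rfl] at *
            rw [hh]
            exact congrArg _ heq
        _ = g (N + n) := (hcons (N + n)).symm

theorem higman_noDesc (hwf : NoInfiniteDescent (Λ := Λ)) :
    ¬ ∃ f : ℕ → List Λ, ∀ n, HigmanLT (f (n + 1)) (f n) := by
  rintro ⟨f, hf⟩
  have hle : ∀ n, HigmanLE (f (n + 1)) (f n) := fun n => (hf n).1
  have hlen : ∀ n, (f (n + 1)).length ≤ (f n).length := fun n => higmanLE_length (hle n)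
  obtain ⟨N, hN⟩ := eventually_const (wellFounded_lt) (fun n => (f n).length) hlen
  apply fixedLen hwf ((f N).length)
  refine ⟨fun n => f (N + n), fun n => hN n, fun n => ?_, fun n => ?_⟩
  · apply higmanLE_forall₂ (hle (N + n))
    have e1 := hN n
    have e2 := hN (n + 1)
    rw [show N + n + 1 = N + (n + 1) from rfl, e1, e2]
  · intro heq
    have heq' : f (N + n + 1) = f (N + n) := heq
    exact (hf (N + n)).2 (heq' ▸ higmanLE_refl (f (N + n)))

theorem hw_wf (hwf : NoInfiniteDescent (Λ := Λ)) :
    WellFounded ((· < ·) : HW Λ → HW Λ → Prop) := by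
  apply wf_of_noDesc
  rintro ⟨f, hf⟩
  exact higman_noDesc hwf ⟨f, fun n => hw_lt_iff.mp (hf n)⟩

/-! ### Intersections of principal lower sets of words -/

theorem inter_principal_finGen
    (hint : ∀ a b : Λ, FinGenLowerLetters ({x | x ≤ a} ∩ {x | x ≤ b})) :
    ∀ u v : List Λ, FinGenLowerWords ({x | HigmanLE x u} ∩ {x | HigmanLE x v}) := by
  classical
  intro u
  induction u with
  | nil =>
    intro v
    refine ⟨{[]}, ?_⟩
    ext x
    simp only [Set.mem_inter_iff, Set.mem_setOf_eq, Finset.mem_singleton]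
    constructor
    · rintro ⟨h1, -⟩
      exact ⟨[], rfl, h1⟩
    · rintro ⟨w, rfl, hxw⟩
      have : x = [] := higmanLE_nil_right hxw
      subst this
      exact ⟨List.SublistForall₂.nil, List.SublistForall₂.nil⟩
  | cons a u' ihu =>
    intro v
    induction v with
    | nil =>
      refine ⟨{[]}, ?_⟩
      ext x
      simp only [Set.mem_inter_iff, Set.mem_setOf_eq, Finset.mem_singleton]
      constructor
      · rintro ⟨-, h2⟩
        exact ⟨[], rfl, h2⟩
      · rintro ⟨w, rfl, hxw⟩
        have : x = [] := higmanLE_nil_right hxw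
        subst this
        exact ⟨List.SublistForall₂.nil, List.SublistForall₂.nil⟩
    | cons b v' ihv =>
      obtain ⟨F₁, hF₁⟩ := ihu (b :: v')
      obtain ⟨F₂, hF₂⟩ := ihv
      obtain ⟨F₃, hF₃⟩ := ihu v'
      obtain ⟨Fab, hFab⟩ := hint a b
      refine ⟨F₁ ∪ F₂ ∪ (Fab ×ˢ F₃).image (fun p => p.1 :: p.2), ?_⟩
      ext x
      simp only [Set.mem_inter_iff, Set.mem_setOf_eq]
      constructor
      · rintro ⟨hxu, hxv⟩
        cases hxu with
        | nil =>
          have hmem : ([] : List Λ) ∈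
              ({x | HigmanLE x u'} ∩ {x | HigmanLE x (b :: v')}) :=
            ⟨List.SublistForall₂.nil, List.SublistForall₂.nil⟩
          rw [hF₁] at hmem
          obtain ⟨w, hw, hlew⟩ := hmem
          exact ⟨w, Finset.mem_union_left _ (Finset.mem_union_left _ hw), hlew⟩
        | @cons c _ x' _ hca hx'u' =>
          cases hxv with
          | cons hcb hx'v' =>
            have hc : c ∈ ({x | x ≤ a} : Set Λ) ∩ {x | x ≤ b} := ⟨hca, hcb⟩
            rw [hFab] at hc
            obtain ⟨d, hd, hcd⟩ := hc
            have hx' : x' ∈ ({x | HigmanLE x u'} ∩ {x | HigmanLE x v'}) :=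
              ⟨hx'u', hx'v'⟩
            rw [hF₃] at hx'
            obtain ⟨g, hg, hx'g⟩ := hx'
            refine ⟨d :: g, Finset.mem_union_right _ ?_,
              List.SublistForall₂.cons hcd hx'g⟩
            exact Finset.mem_image.mpr ⟨(d, g), Finset.mem_product.mpr ⟨hd, hg⟩, rfl⟩
          | cons_right hxv' =>
            have hmem : (c :: x') ∈
                ({x | HigmanLE x (a :: u')} ∩ {x | HigmanLE x v'}) :=
              ⟨List.SublistForall₂.cons hca hx'u', hxv'⟩
            rw [hF₂] at hmem
            obtain ⟨w, hw, hlew⟩ := hmem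
            exact ⟨w, Finset.mem_union_left _ (Finset.mem_union_right _ hw), hlew⟩
        | cons_right hxu' =>
          have hmem : x ∈ ({x | HigmanLE x u'} ∩ {x | HigmanLE x (b :: v')}) :=
            ⟨hxu', hxv⟩
          rw [hF₁] at hmem
          obtain ⟨w, hw, hlew⟩ := hmem
          exact ⟨w, Finset.mem_union_left _ (Finset.mem_union_left _ hw), hlew⟩
      · rintro ⟨w, hw, hxw⟩
        have hwmem : w ∈ ({x | HigmanLE x (a :: u')} ∩ {x | HigmanLE x (b :: v')}) := by
          rcases Finset.mem_union.mp hw with hw' | hw'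
          · rcases Finset.mem_union.mp hw' with h1 | h2
            · have : w ∈ ({x | HigmanLE x u'} ∩ {x | HigmanLE x (b :: v')}) := by
                rw [hF₁]
                exact ⟨w, h1, higmanLE_refl w⟩
              exact ⟨List.SublistForall₂.cons_right this.1, this.2⟩
            · have : w ∈ ({x | HigmanLE x (a :: u')} ∩ {x | HigmanLE x v'}) := by
                rw [hF₂]
                exact ⟨w, h2, higmanLE_refl w⟩
              exact ⟨this.1, List.SublistForall₂.cons_right this.2⟩
          · obtain ⟨⟨d, g⟩, hdg, rfl⟩ := Finset.mem_image.mp hw'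
            obtain ⟨hd, hg⟩ := Finset.mem_product.mp hdg
            have hdab : d ∈ ({x | x ≤ a} : Set Λ) ∩ {x | x ≤ b} := by
              rw [hFab]
              exact ⟨d, hd, le_rfl⟩
            have hguv : g ∈ ({x | HigmanLE x u'} ∩ {x | HigmanLE x v'}) := by
              rw [hF₃]
              exact ⟨g, hg, higmanLE_refl g⟩
            exact ⟨List.SublistForall₂.cons hdab.1 hguv.1,
              List.SublistForall₂.cons hdab.2 hguv.2⟩
        exact ⟨higmanLE_trans hxw hwmem.1, higmanLE_trans hxw hwmem.2⟩

theorem finGen_union {S T : Set (List Λ)} (hS : FinGenLowerWords S)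
    (hT : FinGenLowerWords T) : FinGenLowerWords (S ∪ T) := by
  classical
  obtain ⟨F, rfl⟩ := hS
  obtain ⟨G, rfl⟩ := hT
  refine ⟨F ∪ G, ?_⟩
  ext x
  simp only [Set.mem_union, Set.mem_setOf_eq, Finset.mem_union]
  constructor
  · rintro (⟨w, hw, h⟩ | ⟨w, hw, h⟩)
    · exact ⟨w, Or.inl hw, h⟩
    · exact ⟨w, Or.inr hw, h⟩
  · rintro ⟨w, hw | hw, h⟩
    · exact Or.inl ⟨w, hw, h⟩
    · exact Or.inr ⟨w, hw, h⟩

theorem finGen_inter_principal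
    (hint : ∀ a b : Λ, FinGenLowerLetters ({x | x ≤ a} ∩ {x | x ≤ b}))
    {S : Set (List Λ)} (hS : FinGenLowerWords S) (v : List Λ) :
    FinGenLowerWords (S ∩ {x | HigmanLE x v}) := by
  classical
  obtain ⟨F, rfl⟩ := hS
  induction F using Finset.induction with
  | empty =>
    refine ⟨∅, ?_⟩
    ext x
    simp
  | @insert a F hna ih =>
    have heq : ({x | ∃ w ∈ insert a F, HigmanLE x w} ∩ {x | HigmanLE x v})
        = ({x | HigmanLE x a} ∩ {x | HigmanLE x v})
          ∪ ({x | ∃ w ∈ F, HigmanLE x w} ∩ {x | HigmanLE x v}) := by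
      ext x
      simp only [Set.mem_union, Set.mem_inter_iff, Set.mem_setOf_eq, Finset.mem_insert]
      constructor
      · rintro ⟨⟨w, rfl | hw, hxw⟩, hv⟩
        · exact Or.inl ⟨hxw, hv⟩
        · exact Or.inr ⟨⟨w, hw, hxw⟩, hv⟩
      · rintro (⟨h1, hv⟩ | ⟨⟨w, hw, hxw⟩, hv⟩)
        · exact ⟨⟨a, Or.inl rfl, h1⟩, hv⟩
        · exact ⟨⟨w, Or.inr hw, hxw⟩, hv⟩
    rw [heq]
    exact finGen_union (inter_principal_finGen hint a v) ih

theorem capSet_finGen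
    (hint : ∀ a b : Λ, FinGenLowerLetters ({x | x ≤ a} ∩ {x | x ≤ b}))
    (S : Finset (List Λ)) (hS : S.Nonempty) :
    FinGenLowerWords {y | ∀ x ∈ S, HigmanLE y x} := by
  classical
  induction S using Finset.induction with
  | empty => exact absurd hS (by simp)
  | @insert a S hna ih =>
    rcases S.eq_empty_or_nonempty with rfl | hS'
    · refine ⟨{a}, ?_⟩
      ext y
      simp only [Set.mem_setOf_eq, Finset.mem_singleton, Finset.mem_insert,
        Finset.notMem_empty]
      constructor
      · intro h
        exact ⟨a, rfl, h a (Or.inl rfl)⟩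
      · rintro ⟨w, rfl, h⟩ x (rfl | hx)
        · exact h
        · exact hx.elim
    · have heq : {y | ∀ x ∈ insert a S, HigmanLE y x}
          = {y | ∀ x ∈ S, HigmanLE y x} ∩ {x | HigmanLE x a} := by
        ext y
        simp only [Set.mem_inter_iff, Set.mem_setOf_eq, Finset.mem_insert]
        constructor
        · intro h
          exact ⟨fun x hx => h x (Or.inr hx), h a (Or.inl rfl)⟩
        · rintro ⟨h1, h2⟩ x (rfl | hx)
          · exact h2
          · exact h1 x hx
      rw [heq]
      exact finGen_inter_principal hint (ih hS') a

/-! ### No descending sequences of finitely generated lower sets of words -/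

theorem noDesc_finGen (hwf : NoInfiniteDescent (Λ := Λ)) :
    ¬ ∃ D : ℕ → Set (List Λ), (∀ n, FinGenLowerWords (D n)) ∧
      ∀ n, D (n + 1) ⊂ D n := by
  rintro ⟨D, hfg, hchain⟩
  choose F hF using hfg
  refine hoare_wf (P := HW Λ) (hw_wf hwf) ⟨fun n => F n, fun n => ?_⟩
  have e : ∀ n, finLow (P := HW Λ) (F n) = D n := by
    intro n
    rw [hF n]
    rfl
  rw [e n, e (n + 1)]
  exact hchain n

end HigmanAux

/-- if `Λ` is well-founded and any two principal lower sets of `Λ`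
intersect in a finitely generated lower set, then every MacNeille closed lower set of
`Λ*` other than `Λ*` is a finitely generated lower set; consequently the MacNeille
completion of `Λ*` (realized by the closed lower sets ordered by inclusion) is
well-founded. -/
theorem closedLower_finGen_sufficient {Λ : Type*} [PartialOrder Λ]
    (hwf : NoInfiniteDescent (Λ := Λ))
    (hint : ∀ a b : Λ, FinGenLowerLetters ({x | x ≤ a} ∩ {x | x ≤ b})) :
    (∀ W : Set (List Λ), ClosedLower W → W ≠ Set.univ → FinGenLowerWords W) ∧
    ¬ ∃ f : ℕ → Set (List Λ), (∀ n, ClosedLower (f n)) ∧ ∀ n, f (n + 1) ⊂ f n := by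
  classical
  have part1 : ∀ W : Set (List Λ), ClosedLower W → W ≠ Set.univ → FinGenLowerWords W := by
    intro W hW hne
    -- the upper cone of `W` is nonempty
    have hUne : (upperCone W).Nonempty := by
      by_contra h
      rw [Set.not_nonempty_iff_eq_empty] at h
      apply hne
      rw [hW, h]
      ext y
      simp [lowerCone]
    obtain ⟨x₀, hx₀⟩ := hUne
    -- the family of finite intersections of principal lower sets from the upper cone
    set C : Set (Set (List Λ)) :=
      {D | ∃ S : Finset (List Λ), S.Nonempty ∧ ↑S ⊆ upperCone W ∧
        D = {y | ∀ x ∈ S, HigmanLE y x}} with hC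
    have hCfg : ∀ D ∈ C, FinGenLowerWords D := by
      rintro D ⟨S, hSne, -, rfl⟩
      exact HigmanAux.capSet_finGen hint S hSne
    have hWsub : ∀ D ∈ C, W ⊆ D := by
      rintro D ⟨S, -, hSsub, rfl⟩ w hw x hx
      exact hSsub (Finset.mem_coe.mpr hx) w hw
    -- a base element of the family
    have ht₀ : ({y | ∀ x ∈ ({x₀} : Finset (List Λ)), HigmanLE y x} : Set (List Λ)) ∈ C := by
      refine ⟨{x₀}, Finset.singleton_nonempty x₀, ?_, rfl⟩
      intro z hz
      have : z = x₀ := by simpa using hz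
      subst this
      exact hx₀
    -- the family is well-founded under strict inclusion
    have wfT : WellFounded ((· < ·) : {D : Set (List Λ) // D ∈ C} →
        {D : Set (List Λ) // D ∈ C} → Prop) := by
      apply HigmanAux.wf_of_noDesc
      rintro ⟨g, hg⟩
      apply HigmanAux.noDesc_finGen hwf
      refine ⟨fun n => (g n).1, fun n => hCfg _ (g n).2, fun n => ?_⟩
      exact hg n
    obtain ⟨t, -, hmin⟩ := wfT.has_min Set.univ ⟨⟨_, ht₀⟩, trivial⟩
    obtain ⟨S, hSne, hSsub, hDeq⟩ := t.2
    -- the minimal element is contained in every principal lower set from the cone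
    have hDW : ∀ x ∈ upperCone W, t.1 ⊆ {y | HigmanLE y x} := by
      intro x hx
      have hD'C : ({y | ∀ z ∈ insert x S, HigmanLE y z} : Set (List Λ)) ∈ C := by
        refine ⟨insert x S, Finset.insert_nonempty _ _, ?_, rfl⟩
        intro z hz
        rcases Finset.mem_insert.mp (Finset.mem_coe.mp hz) with rfl | hz'
        · exact hx
        · exact hSsub (Finset.mem_coe.mpr hz')
      have hsub' : ({y | ∀ z ∈ insert x S, HigmanLE y z} : Set (List Λ)) ⊆ t.1 := by
        rw [hDeq]
        intro y hy z hz
        exact hy z (Finset.mem_insert_of_mem hz)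
      have heq' : ({y | ∀ z ∈ insert x S, HigmanLE y z} : Set (List Λ)) = t.1 := by
        by_contra hne'
        exact hmin ⟨_, hD'C⟩ trivial
          (Subtype.mk_lt_mk.mpr (lt_of_le_of_ne hsub' hne'))
      intro y hy
      rw [← heq'] at hy
      exact hy x (Finset.mem_insert_self x S)
    have hDsubW : t.1 ⊆ W := by
      rw [hW]
      intro y hy x hx
      exact hDW x hx hy
    have hfinal : W = t.1 := Set.Subset.antisymm (hWsub t.1 t.2) hDsubW
    rw [hfinal]
    exact hCfg t.1 t.2
  refine ⟨part1, ?_⟩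
  rintro ⟨f, hcl, hdec⟩
  apply HigmanAux.noDesc_finGen hwf
  refine ⟨fun n => f (n + 1), fun n => ?_, fun n => hdec (n + 1)⟩
  apply part1 _ (hcl (n + 1))
  intro h
  have hd := hdec n
  rw [h] at hd
  have huniv : f n = Set.univ := Set.univ_subset_iff.mp hd.subset
  rw [huniv] at hd
  exact ssubset_irrefl _ hd
end

section
/- If the ordered set Λ is well-founded, then Λ* equipped with the Higman ordering is well-founded: there is no infinite strictly decreasing sequence of words x₀ > x₁ > x₂ > ⋯ in Λ*. -/
/-!
Send a word to the multiset of its letters. Deleting a letter or replacing it by a smaller one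
decreases this multiset in the Dershowitz–Manna ordering, so a strictly Higman-decreasing
sequence of words yields a strictly decreasing sequence of multisets, and the Dershowitz–Manna
ordering over a well-founded order is well-founded.
-/

namespace Multiset

variable {α : Type*} [Preorder α] {M N : Multiset α}

theorem isDershowitzMannaLT_cons_self (a : α) : IsDershowitzMannaLT M (a ::ₘ M) :=
  ⟨M, 0, {a}, singleton_ne_zero a, (add_zero M).symm, by rw [add_comm, singleton_add], by simp⟩

theorem IsDershowitzMannaLT.cons (a : α) (h : IsDershowitzMannaLT M N) :
    IsDershowitzMannaLT (a ::ₘ M) (a ::ₘ N) := by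
  obtain ⟨X, Y, Z, hZ, rfl, rfl, hYZ⟩ := h
  exact ⟨a ::ₘ X, Y, Z, hZ, (cons_add a X Y).symm, (cons_add a X Z).symm, hYZ⟩

theorem isDershowitzMannaLT_cons_cons {a b : α} (hab : a < b) :
    IsDershowitzMannaLT (a ::ₘ M) (b ::ₘ M) :=
  ⟨M, {a}, {b}, singleton_ne_zero b, by rw [add_comm, singleton_add],
    by rw [add_comm, singleton_add], by simpa using hab⟩

theorem isDershowitzMannaLT_of_ne_zero (hM : M ≠ 0) : IsDershowitzMannaLT 0 M :=
  ⟨0, 0, M, hM, rfl, (zero_add M).symm, by simp⟩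

end Multiset

open Multiset

theorem List.SublistForall₂.eq_or_isDershowitzMannaLT {Λ : Type*} [PartialOrder Λ]
    {x y : List Λ} (h : SublistForall₂ (· ≤ ·) x y) :
    x = y ∨ IsDershowitzMannaLT (x : Multiset Λ) y := by
  induction h with
  | @nil y =>
    rcases eq_or_ne y [] with rfl | hy
    · exact .inl rfl
    · exact .inr (isDershowitzMannaLT_of_ne_zero (by simpa using hy))
  | @cons a b x y hab _ ih =>
    simp only [← cons_coe]
    rcases hab.eq_or_lt, ih with ⟨rfl | hab, rfl | h⟩
    · exact .inl rfl
    · exact .inr (h.cons a)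
    · exact .inr (isDershowitzMannaLT_cons_cons hab)
    · exact .inr ((h.cons a).trans (isDershowitzMannaLT_cons_cons hab))
  | @cons_right b x y _ ih =>
    rw [← cons_coe]
    rcases ih with rfl | h
    · exact .inr (isDershowitzMannaLT_cons_self b)
    · exact .inr (h.trans (isDershowitzMannaLT_cons_self b))

theorem HigmanLT.isDershowitzMannaLT {Λ : Type*} [PartialOrder Λ] {x y : List Λ}
    (h : HigmanLT x y) : IsDershowitzMannaLT (x : Multiset Λ) y := by
  rcases h.1.eq_or_isDershowitzMannaLT with rfl | h'
  · exact absurd (refl_of (List.SublistForall₂ (· ≤ ·)) x) h.2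
  · exact h'

theorem wellFounded_higmanLT {Λ : Type*} [PartialOrder Λ] [WellFoundedLT Λ] :
    WellFounded (HigmanLT (Λ := Λ)) :=
  Subrelation.wf HigmanLT.isDershowitzMannaLT (InvImage.wf _ wellFounded_isDershowitzMannaLT)

/-- if `Λ` is well-founded then `Λ*` with the Higman ordering is
well-founded: there is no infinite strictly decreasing sequence of words. -/
theorem higman_wellFounded {Λ : Type*} [PartialOrder Λ]
    (hwf : NoInfiniteDescent (Λ := Λ)) :
    ¬ ∃ f : ℕ → List Λ, ∀ n, HigmanLT (f (n + 1)) (f n) := by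
  have : WellFoundedLT Λ :=
    ⟨wellFounded_iff_isEmpty_descending_chain.2 ⟨fun ⟨f, hf⟩ ↦ hwf ⟨f, hf⟩⟩⟩
  rintro ⟨f, hf⟩
  exact (wellFounded_iff_isEmpty_descending_chain.1 wellFounded_higmanLT).false ⟨f, hf⟩
end

section
/- If every finitely generated lower set in Λ* is MacNeille closed, then each pair of letters of Λ that is bounded below in Λ is also bounded above in Λ. Equivalently (contrapositive): if there exist letters α, β, λ ∈ Λ with λ < α, λ < β, and α, β having no common upper bound in Λ, then the lower set ↓{α, β} of Λ* is not closed. -/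
theorem higmanLE_refl {Λ : Type*} [PartialOrder Λ] (x : List Λ) : HigmanLE x x :=
  List.SublistForall₂.is_refl.refl x

theorem higmanLE_singleton_left_iff {Λ : Type*} [PartialOrder Λ] {a : Λ} {y : List Λ} :
    HigmanLE [a] y ↔ ∃ b ∈ y, a ≤ b := by
  simp [HigmanLE, List.sublistForall₂_iff, List.forall₂_cons_left_iff, and_comm]

theorem HigmanLE.length_le {Λ : Type*} [PartialOrder Λ] {x y : List Λ} (h : HigmanLE x y) :
    x.length ≤ y.length := by
  obtain ⟨z, hxz, hzy⟩ := List.sublistForall₂_iff.1 h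
  exact hxz.length_eq.trans_le hzy.length_le

theorem higmanLE_pair_of_mem {Λ : Type*} [PartialOrder Λ] {l a b : Λ} (hla : l ≤ a)
    (hlb : l ≤ b) (hab : a ≠ b) {y : List Λ} (ha : a ∈ y) (hb : b ∈ y) : HigmanLE [l, l] y := by
  induction y with
  | nil => simp at ha
  | cons c t ih =>
    by_cases hac : a = c
    · subst hac
      have hbt : b ∈ t := (List.mem_cons.1 hb).resolve_left (Ne.symm hab)
      exact .cons hla (higmanLE_singleton_left_iff.2 ⟨b, hbt, hlb⟩)
    by_cases hbc : b = c
    · subst hbc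
      have hat : a ∈ t := (List.mem_cons.1 ha).resolve_left hac
      exact .cons hlb (higmanLE_singleton_left_iff.2 ⟨a, hat, hla⟩)
    exact .cons_right (ih ((List.mem_cons.1 ha).resolve_left hac)
      ((List.mem_cons.1 hb).resolve_left hbc))

theorem pair_mem_lowerCone_upperCone {Λ : Type*} [PartialOrder Λ] {α β l : Λ} (hlα : l ≤ α)
    (hlβ : l ≤ β) (hαβ : ¬ ∃ u, α ≤ u ∧ β ≤ u) {S : Set (List Λ)} (hα : [α] ∈ S)
    (hβ : [β] ∈ S) : [l, l] ∈ lowerCone (upperCone S) := by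
  intro y hy
  obtain ⟨a, ha, hαa⟩ := higmanLE_singleton_left_iff.1 (hy _ hα)
  obtain ⟨b, hb, hβb⟩ := higmanLE_singleton_left_iff.1 (hy _ hβ)
  have hab : a ≠ b := by
    rintro rfl
    exact hαβ ⟨a, hαa, hβb⟩
  exact higmanLE_pair_of_mem (hlα.trans hαa) (hlβ.trans hβb) hab ha hb

theorem not_closedLower_downset_pair {Λ : Type*} [PartialOrder Λ] {α β l : Λ} (hlα : l ≤ α)
    (hlβ : l ≤ β) (hαβ : ¬ ∃ u, α ≤ u ∧ β ≤ u) :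
    ¬ ClosedLower {x : List Λ | HigmanLE x [α] ∨ HigmanLE x [β]} := by
  intro hcl
  have hll : [l, l] ∈ lowerCone (upperCone {x : List Λ | HigmanLE x [α] ∨ HigmanLE x [β]}) :=
    pair_mem_lowerCone_upperCone hlα hlβ hαβ (.inl (higmanLE_refl _))
      (.inr (higmanLE_refl _))
  rw [← hcl] at hll
  rcases hll with h | h <;> exact absurd h.length_le (by simp)

theorem finGenLowerWords_downset_pair {Λ : Type*} [PartialOrder Λ] (α β : Λ) :
    FinGenLowerWords {x : List Λ | HigmanLE x [α] ∨ HigmanLE x [β]} := by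
  classical
  exact ⟨{[α], [β]}, by ext x; simp⟩

/-- if every finitely generated lower set in `Λ*` is closed, then every
pair of letters bounded below in `Λ` is also bounded above in `Λ`; equivalently
(contrapositive), if `l < α`, `l < β` and `α, β` have no common upper bound, then the
lower set `↓{α, β}` of `Λ*` is not closed. -/
theorem finGen_closed_necessary {Λ : Type*} [PartialOrder Λ] :
    ((∀ S : Set (List Λ), FinGenLowerWords S → ClosedLower S) →
      ∀ α β : Λ, (∃ c, c ≤ α ∧ c ≤ β) → ∃ u, α ≤ u ∧ β ≤ u) ∧
    (∀ α β l : Λ, l < α → l < β → (¬ ∃ u, α ≤ u ∧ β ≤ u) →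
      ¬ ClosedLower {x : List Λ | HigmanLE x [α] ∨ HigmanLE x [β]}) := by
  refine ⟨fun hclosed α β ⟨c, hcα, hcβ⟩ => ?_, fun α β l hlα hlβ hαβ =>
    not_closedLower_downset_pair hlα.le hlβ.le hαβ⟩
  by_contra hαβ
  exact not_closedLower_downset_pair hcα hcβ hαβ (hclosed _ (finGenLowerWords_downset_pair α β))
end

section
/- (Cancellation rule) Every closed upper set Z of Λ* satisfies: if yαz ∈ Z and yβz ∈ Z, where α, β ∈ Λ are incompatible letters (having no common lower bound in Λ) and y, z ∈ Λ*, then yz ∈ Z. -/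
/-!
An embedding of `x` into `y ++ α :: z` either skips `α`, and then `x ≤ y ++ z`, or splits `x` as
`p ++ c :: t` with `p ≤ y`, `c ≤ α`, `t ≤ z`. Since `Z = (Z^∇)^Δ`, it suffices to show `x ≤ y ++ z`
for `x ≤ y ++ α :: z` and `x ≤ y ++ β :: z`. If neither embedding skips, the two marked letters
`c₁ ≤ α` and `c₂ ≤ β` of `x` are distinct, as `α, β` are incompatible; the later one starts a suffix
of `x` that embeds into `z`, while the part before it embeds into `y`.
-/

namespace List

variable {α β : Type*}

theorem SublistForall₂.append_left {R : α → β → Prop} {l₁ : List α} {l₂ : List β} (l : List β)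
    (h : SublistForall₂ R l₁ l₂) : SublistForall₂ R l₁ (l ++ l₂) := by
  induction l with
  | nil => exact h
  | cons _ _ ih => exact ih.cons_right

theorem SublistForall₂.append {R : α → β → Prop} {l₁ l₃ : List α} {l₂ l₄ : List β}
    (h₁ : SublistForall₂ R l₁ l₂) (h₂ : SublistForall₂ R l₃ l₄) :
    SublistForall₂ R (l₁ ++ l₃) (l₂ ++ l₄) := by
  induction h₁ with
  | nil => exact h₂.append_left _
  | cons hab _ ih => exact ih.cons hab
  | cons_right _ ih => exact ih.cons_right

theorem SublistForall₂.append_or_split_of_append_cons {R : α → β → Prop} {x : List α}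
    {z : List β} {a : β} : ∀ {y : List β}, SublistForall₂ R x (y ++ a :: z) →
      SublistForall₂ R x (y ++ z) ∨
        ∃ p c t, x = p ++ c :: t ∧ SublistForall₂ R p y ∧ R c a ∧ SublistForall₂ R t z
  | [], .nil => .inl .nil
  | [], .cons hc ht => .inr ⟨[], _, _, rfl, .nil, hc, ht⟩
  | [], .cons_right h => .inl h
  | _ :: _, .nil => .inl .nil
  | _ :: _, .cons hb h =>
    match append_or_split_of_append_cons h with
    | .inl h => .inl (h.cons hb)
    | .inr ⟨p, c, t, hx, hp, hc, ht⟩ => .inr ⟨_ :: p, c, t, hx ▸ rfl, hp.cons hb, hc, ht⟩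
  | _ :: _, .cons_right h =>
    match append_or_split_of_append_cons h with
    | .inl h => .inl h.cons_right
    | .inr ⟨p, c, t, hx, hp, hc, ht⟩ => .inr ⟨p, c, t, hx, hp.cons_right, hc, ht⟩

variable {R : α → α → Prop} [Std.Refl R] [IsTrans α R]

theorem sublistForall₂_append_of_suffix {p s t y z : List α} (hp : SublistForall₂ R p y)
    (hst : s <:+ t) (ht : SublistForall₂ R t z) : SublistForall₂ R (p ++ s) (y ++ z) :=
  hp.append (_root_.trans (hst.sublist.sublistForall₂ (Rₐ := R)) ht)

theorem eq_or_sublistForall₂_append_of_split {p₁ p₂ t₁ t₂ y z : List α} {c₁ c₂ : α}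
    (h : p₁ ++ c₁ :: t₁ = p₂ ++ c₂ :: t₂)
    (hp₁ : SublistForall₂ R p₁ y) (hp₂ : SublistForall₂ R p₂ y)
    (ht₁ : SublistForall₂ R t₁ z) (ht₂ : SublistForall₂ R t₂ z) :
    c₁ = c₂ ∨ SublistForall₂ R (p₁ ++ c₁ :: t₁) (y ++ z) := by
  have hs₁ : c₁ :: t₁ <:+ p₁ ++ c₁ :: t₁ := suffix_append _ _
  have hs₂ : c₂ :: t₂ <:+ p₁ ++ c₁ :: t₁ := h ▸ suffix_append _ _
  rcases suffix_or_suffix_of_suffix hs₁ hs₂ with h₁₂ | h₂₁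
  · rcases suffix_cons_iff.1 h₁₂ with heq | hsuf
    · exact .inl (cons.inj heq).1
    · exact .inr (sublistForall₂_append_of_suffix hp₁ hsuf ht₂)
  · rcases suffix_cons_iff.1 h₂₁ with heq | hsuf
    · exact .inl (cons.inj heq).1.symm
    · exact .inr (h ▸ sublistForall₂_append_of_suffix hp₂ hsuf ht₁)

end List

/-- cancellation rule: every closed upper set `Z` of `Λ*` satisfies:
if `yαz ∈ Z` and `yβz ∈ Z` with `α, β` incompatible letters, then `yz ∈ Z`. -/
theorem closedUpper_cancel {Λ : Type*} [PartialOrder Λ]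
    (Z : Set (List Λ)) (hZ : ClosedUpper Z) : StableCancel Z := by
  intro y z α β hinc h₁ h₂
  rw [hZ] at h₁ h₂ ⊢
  intro x hx
  obtain h | ⟨p₁, c₁, t₁, rfl, hp₁, hc₁, ht₁⟩ :=
    List.SublistForall₂.append_or_split_of_append_cons (h₁ _ hx)
  · exact h
  obtain h | ⟨p₂, c₂, t₂, hx, hp₂, hc₂, ht₂⟩ :=
    List.SublistForall₂.append_or_split_of_append_cons (h₂ _ hx)
  · exact h
  obtain rfl | h := List.eq_or_sublistForall₂_append_of_split hx hp₁ hp₂ ht₁ ht₂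
  · exact absurd ⟨c₁, hc₁, hc₂⟩ hinc
  · exact h
end

section
/- (Reduction rule) Every closed upper set Z of Λ* satisfies: if yααz ∈ Z and yγz ∈ Z, where α < γ in Λ and y, z ∈ Λ*, then yαz ∈ Z. -/
/-! A word lies in `Z^{∇Δ}` as soon as it is above every common Higman lower bound of
two words of `Z`, and every common lower bound of `yααz` and `yγz` lies below `yαz`.
For empty `y` this is a case analysis on how a word embeds into `ααz` and `γz`; a common
prefix `y` is then peeled off letter by letter. -/

section Higman

variable {Λ : Type*} [PartialOrder Λ]

lemma higmanLE_of_cons_higmanLE {a : Λ} {w x : List Λ} (h : HigmanLE (a :: w) x) :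
    HigmanLE w x :=
  IsTrans.trans (r := List.SublistForall₂ ((· ≤ ·) : Λ → Λ → Prop)) _ _ _
    (List.sublist_cons_self a w).sublistForall₂ h

lemma higmanLE_cons_of_higmanLE_cons_cons_of_higmanLE_cons {α γ : Λ} {w z : List Λ}
    (h₁ : HigmanLE w (α :: α :: z)) (h₂ : HigmanLE w (γ :: z)) : HigmanLE w (α :: z) := by
  cases h₁ with
  | nil => exact .nil
  | cons hα _ =>
    cases h₂ with
    | cons _ hz => exact .cons hα hz
    | cons_right hz => exact .cons_right hz
  | cons_right h => exact h

lemma higmanLE_append_left_of_forall {s t r : List Λ}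
    (h : ∀ w, HigmanLE w s → HigmanLE w t → HigmanLE w r) (y : List Λ) :
    ∀ w, HigmanLE w (y ++ s) → HigmanLE w (y ++ t) → HigmanLE w (y ++ r) := by
  induction y with
  | nil => exact h
  | cons b y ih =>
    rintro (_ | ⟨a, w⟩) hs ht
    · exact .nil
    cases hs with
    | cons hab hs =>
      cases ht with
      | cons _ ht => exact .cons hab (ih w hs ht)
      | cons_right ht => exact .cons hab (ih w hs (higmanLE_of_cons_higmanLE ht))
    | cons_right hs =>
      cases ht with
      | cons hab ht => exact .cons hab (ih w (higmanLE_of_cons_higmanLE hs) ht)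
      | cons_right ht => exact .cons_right (ih _ hs ht)

lemma ClosedUpper.mem_of_forall_higmanLE {Z : Set (List Λ)} (hZ : ClosedUpper Z)
    {s t r : List Λ} (hs : s ∈ Z) (ht : t ∈ Z)
    (h : ∀ w, HigmanLE w s → HigmanLE w t → HigmanLE w r) : r ∈ Z := by
  rw [hZ]
  exact fun w hw => h w (hw s hs) (hw t ht)

end Higman

/-- reduction rule: every closed upper set `Z` of `Λ*` satisfies:
if `yααz ∈ Z` and `yγz ∈ Z` with `α < γ`, then `yαz ∈ Z`. -/
theorem closedUpper_reduce {Λ : Type*} [PartialOrder Λ]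
    (Z : Set (List Λ)) (hZ : ClosedUpper Z) : StableReduce Z := by
  intro y z α γ _ hααz hγz
  exact hZ.mem_of_forall_higmanLE hααz hγz <| higmanLE_append_left_of_forall
    (fun _ => higmanLE_cons_of_higmanLE_cons_cons_of_higmanLE_cons) y
end

section
/- (Permutation rule) Every closed upper set Z of Λ* satisfies: if yαβz ∈ Z and yγz ∈ Z, where α, β, γ ∈ Λ with α, β incomparable and both strictly below γ, and y, z ∈ Λ*, then yβαz ∈ Z. -/
/-! A closed upper set contains every word lying above all common lower bounds of two of its
members. Every word below both `yαβz` and `yγz` is below `yβαz`: an embedding into `yγz` places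
at most one letter strictly between `y` and `z`, so the embedding into `yαβz` can be rearranged
to use only one of `α`, `β` there. -/

namespace List

variable {α : Type*} {R : α → α → Prop}

theorem SublistForall₂.of_cons {a : α} {l₁ l₂ : List α} (h : SublistForall₂ R (a :: l₁) l₂) :
    SublistForall₂ R l₁ l₂ := by
  induction l₂ with
  | nil => cases h
  | cons b l₂ ih =>
    rcases h with _ | ⟨-, h⟩ | ⟨h⟩
    · exact .cons_right h
    · exact .cons_right (ih h)

theorem SublistForall₂.swap_of_contract {a b c : α} {x y z : List α}
    (hab : SublistForall₂ R x (y ++ a :: b :: z)) (hc : SublistForall₂ R x (y ++ c :: z)) :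
    SublistForall₂ R x (y ++ b :: a :: z) := by
  induction y generalizing x with
  | nil =>
    rcases x with _ | ⟨u, x⟩
    · exact .nil
    rcases hc with _ | ⟨-, hxz⟩ | ⟨hc⟩
    · rcases hab with _ | ⟨hua, -⟩ | ⟨_ | ⟨hub, -⟩ | ⟨hab⟩⟩
      · exact .cons_right (.cons hua hxz)
      · exact .cons hub (.cons_right hxz)
      · exact .cons_right (.cons_right hab)
    · exact .cons_right (.cons_right hc)
  | cons v y ih =>
    rcases x with _ | ⟨u, x⟩
    · exact .nil
    rcases hab with _ | ⟨huv, hab⟩ | ⟨hab⟩ <;> rcases hc with _ | ⟨huv, hc⟩ | ⟨hc⟩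
    · exact .cons huv (ih hab hc)
    · exact .cons huv (ih hab hc.of_cons)
    · exact .cons huv (ih hab.of_cons hc)
    · exact .cons_right (ih hab hc)

end List

theorem ClosedUpper.mem_of_forall_higmanLE_s14 {Λ : Type*} [PartialOrder Λ] {Z : Set (List Λ)}
    (hZ : ClosedUpper Z) {u v w : List Λ}
    (h : ∀ x, HigmanLE x u → HigmanLE x v → HigmanLE x w) (hu : u ∈ Z) (hv : v ∈ Z) : w ∈ Z := by
  rw [hZ]
  exact fun x hx ↦ h x (hx u hu) (hx v hv)

/-- permutation rule: every closed upper set `Z` of `Λ*` satisfies: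
if `yαβz ∈ Z` and `yγz ∈ Z` with `α, β` incomparable and both strictly below `γ`,
then `yβαz ∈ Z`. -/
theorem closedUpper_perm {Λ : Type*} [PartialOrder Λ]
    (Z : Set (List Λ)) (hZ : ClosedUpper Z) : StablePerm Z :=
  fun _ _ _ _ _ _ _ _ _ hab hc ↦
    hZ.mem_of_forall_higmanLE_s14 (fun _ ↦ List.SublistForall₂.swap_of_contract) hab hc
end

section
/- Let Λ be a conditional meet-semilattice. An upper set Z of Λ* is stable with respect to the cancellation, reduction, permutation, and meet rules if and only if Z obeys the compound rule: whenever yα₁⋯α_n z ∈ Z (n ≥ 1) and yβz ∈ Z with y, z ∈ Λ*, α_i, β ∈ Λ, and β ≰ α_i for all i, then ytz ∈ Z, where t is any word listing in some order the maximal elements of the set {α_i ∧ β : 1 ≤ i ≤ n and α_i ∧ β exists in Λ} (t may be the empty word). -/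
namespace CompoundAux

variable {Λ : Type*} [PartialOrder Λ]

lemma hle_refl (x : List Λ) : HigmanLE x x :=
  List.SublistForall₂.is_refl.refl x

lemma hle_nil (x : List Λ) : HigmanLE ([] : List Λ) x := List.SublistForall₂.nil

lemma hle_cons {a b : Λ} {x y : List Λ} (h : a ≤ b) (h' : HigmanLE x y) :
    HigmanLE (a :: x) (b :: y) := List.SublistForall₂.cons h h'

lemma hle_prepend {x y : List Λ} (l : List Λ) (h : HigmanLE x y) : HigmanLE x (l ++ y) := by
  induction l with
  | nil => exact h
  | cons a l ih => exact List.SublistForall₂.cons_right ih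

lemma hle_append {x₁ y₁ x₂ y₂ : List Λ} (h₁ : HigmanLE x₁ y₁) (h₂ : HigmanLE x₂ y₂) :
    HigmanLE (x₁ ++ x₂) (y₁ ++ y₂) := by
  induction h₁ with
  | @nil l => exact hle_prepend l h₂
  | cons hr _ ih => exact List.SublistForall₂.cons hr ih
  | cons_right _ ih => exact List.SublistForall₂.cons_right ih

variable {Z : Set (List Λ)}

/-- insert `β` with extra context letters -/
lemma hbins (hZ : IsUpperWordSet Z) {y z : List Λ} {β : Λ} (hβ : y ++ β :: z ∈ Z)
    (p q : List Λ) : (y ++ p) ++ β :: (q ++ z) ∈ Z := by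
  have h1 : HigmanLE (β :: z) (p ++ β :: (q ++ z)) :=
    hle_prepend p (hle_cons le_rfl (hle_prepend q (hle_refl z)))
  have h2 := hZ _ _ (hle_append (hle_refl y) h1) hβ
  simpa [List.append_assoc] using h2

/-- merge an adjacent pair `a :: c :: r` with `a ≤ c` into `c :: r` -/
lemma adj_merge (hZ : IsUpperWordSet Z) (hr : StableReduce Z) {y z : List Λ} {β : Λ}
    (hβ : y ++ β :: z ∈ Z) (p r : List Λ) (a c : Λ) (hac : a ≤ c) (hcβ : c < β)
    (h : y ++ (p ++ a :: c :: r) ++ z ∈ Z) : y ++ (p ++ c :: r) ++ z ∈ Z := by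
  have e1 : y ++ (p ++ a :: c :: r) ++ z = (y ++ p) ++ a :: c :: (r ++ z) := by simp
  rw [e1] at h
  have h2 : (y ++ p) ++ c :: c :: (r ++ z) ∈ Z :=
    hZ _ _ (hle_append (hle_refl (y ++ p))
      (hle_cons hac (hle_cons le_rfl (hle_refl (r ++ z))))) h
  have h3 := hr (y ++ p) (r ++ z) c β hcβ h2 (hbins hZ hβ p r)
  have e2 : y ++ (p ++ c :: r) ++ z = (y ++ p) ++ c :: (r ++ z) := by simp
  rw [e2]; exact h3

end CompoundAux

namespace CompoundAux

variable {Λ : Type*} [PartialOrder Λ] {Z : Set (List Λ)}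

/-- merge an adjacent pair `a :: c :: r` with `c ≤ a` into `a :: r` -/
lemma adj_merge' (hZ : IsUpperWordSet Z) (hr : StableReduce Z) {y z : List Λ} {β : Λ}
    (hβ : y ++ β :: z ∈ Z) (p r : List Λ) (a c : Λ) (hca : c ≤ a) (haβ : a < β)
    (h : y ++ (p ++ a :: c :: r) ++ z ∈ Z) : y ++ (p ++ a :: r) ++ z ∈ Z := by
  have e1 : y ++ (p ++ a :: c :: r) ++ z = (y ++ p) ++ a :: c :: (r ++ z) := by simp
  rw [e1] at h
  have h2 : (y ++ p) ++ a :: a :: (r ++ z) ∈ Z :=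
    hZ _ _ (hle_append (hle_refl (y ++ p))
      (hle_cons le_rfl (hle_cons hca (hle_refl (r ++ z))))) h
  have h3 := hr (y ++ p) (r ++ z) a β haβ h2 (hbins hZ hβ p r)
  have e2 : y ++ (p ++ a :: r) ++ z = (y ++ p) ++ a :: (r ++ z) := by simp
  rw [e2]; exact h3

/-- if the word contains two comparable letters, it can be shortened,
keeping all letters dominated. -/
lemma merge (hZ : IsUpperWordSet Z) (hr : StableReduce Z) (hp : StablePerm Z)
    {y z : List Λ} {β : Λ} (hβ : y ++ β :: z ∈ Z) :
    ∀ (m p q : List Λ) (a b : Λ), (a ≤ b ∨ b ≤ a) →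
      (∀ x ∈ p ++ a :: m ++ b :: q, x < β) →
      y ++ (p ++ a :: m ++ b :: q) ++ z ∈ Z →
      ∃ u' : List Λ, u'.length + 1 = (p ++ a :: m ++ b :: q).length ∧
        (∀ x ∈ u', x ∈ p ++ a :: m ++ b :: q) ∧
        (∀ x ∈ p ++ a :: m ++ b :: q, ∃ x' ∈ u', x ≤ x') ∧
        y ++ u' ++ z ∈ Z := by
  intro m
  induction m with
  | nil =>
    intro p q a b hcmp hlt h
    have haβ : a < β := hlt a (by simp)
    have hbβ : b < β := hlt b (by simp)
    rcases hcmp with hab | hba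
    · refine ⟨p ++ b :: q, ?_, ?_, ?_, adj_merge hZ hr hβ p q a b hab hbβ (by simpa using h)⟩
      · simp only [List.length_append, List.length_cons, List.length_nil]; omega
      · intro x hx; simp at hx ⊢; tauto
      · intro x hx; simp at hx
        rcases hx with hx | hx | hx | hx
        · exact ⟨x, by simp [hx], le_rfl⟩
        · exact ⟨b, by simp, hx ▸ hab⟩
        · exact ⟨b, by simp, hx ▸ le_rfl⟩
        · exact ⟨x, by simp [hx], le_rfl⟩
    · refine ⟨p ++ a :: q, ?_, ?_, ?_, adj_merge' hZ hr hβ p q a b hba haβ (by simpa using h)⟩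
      · simp only [List.length_append, List.length_cons, List.length_nil]; omega
      · intro x hx; simp at hx ⊢; tauto
      · intro x hx; simp at hx
        rcases hx with hx | hx | hx | hx
        · exact ⟨x, by simp [hx], le_rfl⟩
        · exact ⟨a, by simp, hx ▸ le_rfl⟩
        · exact ⟨a, by simp, hx ▸ hba⟩
        · exact ⟨x, by simp [hx], le_rfl⟩
  | cons c m' ih =>
    intro p q a b hcmp hlt h
    have haβ : a < β := hlt a (by simp)
    have hcβ : c < β := hlt c (by simp)
    by_cases hac : a ≤ c ∨ c ≤ a
    · -- merge the adjacent pair a, c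
      rcases hac with hac | hca
      · have h' : y ++ (p ++ c :: (m' ++ b :: q)) ++ z ∈ Z :=
          adj_merge hZ hr hβ p (m' ++ b :: q) a c hac hcβ (by simpa using h)
        refine ⟨p ++ c :: m' ++ b :: q, ?_, ?_, ?_, by simpa using h'⟩
        · simp only [List.length_append, List.length_cons]; omega
        · intro x hx; simp at hx ⊢; tauto
        · intro x hx; simp at hx
          rcases hx with hx | hx | hx | hx | hx | hx
          · exact ⟨x, by simp [hx], le_rfl⟩
          · exact ⟨c, by simp, hx ▸ hac⟩
          · exact ⟨c, by simp, hx ▸ le_rfl⟩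
          · exact ⟨x, by simp [hx], le_rfl⟩
          · exact ⟨x, by simp [hx], le_rfl⟩
          · exact ⟨x, by simp [hx], le_rfl⟩
      · have h' : y ++ (p ++ a :: (m' ++ b :: q)) ++ z ∈ Z :=
          adj_merge' hZ hr hβ p (m' ++ b :: q) a c hca haβ (by simpa using h)
        refine ⟨p ++ a :: m' ++ b :: q, ?_, ?_, ?_, by simpa using h'⟩
        · simp only [List.length_append, List.length_cons]; omega
        · intro x hx; simp at hx ⊢; tauto
        · intro x hx; simp at hx
          rcases hx with hx | hx | hx | hx | hx | hx
          · exact ⟨x, by simp [hx], le_rfl⟩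
          · exact ⟨a, by simp, hx ▸ le_rfl⟩
          · exact ⟨a, by simp, hx ▸ hca⟩
          · exact ⟨x, by simp [hx], le_rfl⟩
          · exact ⟨x, by simp [hx], le_rfl⟩
          · exact ⟨x, by simp [hx], le_rfl⟩
    · -- swap a and c, then recurse
      push_neg at hac
      have h1 : (y ++ p) ++ a :: c :: ((m' ++ b :: q) ++ z) ∈ Z := by
        have e : y ++ (p ++ a :: (c :: m') ++ b :: q) ++ z
            = (y ++ p) ++ a :: c :: ((m' ++ b :: q) ++ z) := by simp
        rw [← e]; simpa using h
      have h2 := hp (y ++ p) ((m' ++ b :: q) ++ z) a c β hac.1 hac.2 haβ hcβ h1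
        (hbins hZ hβ p (m' ++ b :: q))
      have h3 : y ++ ((p ++ [c]) ++ a :: m' ++ b :: q) ++ z ∈ Z := by
        have e : y ++ ((p ++ [c]) ++ a :: m' ++ b :: q) ++ z
            = (y ++ p) ++ c :: a :: ((m' ++ b :: q) ++ z) := by simp
        rw [e]; exact h2
      obtain ⟨u', hlen, hsub, hdom, hu'⟩ := ih (p ++ [c]) q a b hcmp
        (by intro x hx; apply hlt; simp at hx ⊢; tauto) h3
      have hiff : ∀ x : Λ, x ∈ (p ++ [c]) ++ a :: m' ++ b :: q ↔
          x ∈ p ++ a :: (c :: m') ++ b :: q := by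
        intro x; simp; tauto
      refine ⟨u', ?_, ?_, ?_, hu'⟩
      · simp only [List.length_append, List.length_cons, List.length_nil] at hlen ⊢; omega
      · intro x hx; exact (hiff x).1 (hsub x hx)
      · intro x hx; exact hdom x ((hiff x).2 hx)

end CompoundAux

namespace CompoundAux

variable {Λ : Type*} [PartialOrder Λ] {Z : Set (List Λ)}

/-- permuting an antichain below β -/
lemma permZ (hZ : IsUpperWordSet Z) (hp : StablePerm Z) {z : List Λ} {β : Λ}
    {u v : List Λ} (hperm : u.Perm v) :
    ∀ y : List Λ, (∀ a ∈ u, a < β) → (∀ a ∈ u, ∀ b ∈ u, a ≤ b → a = b) →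
      y ++ β :: z ∈ Z → y ++ u ++ z ∈ Z → y ++ v ++ z ∈ Z := by
  induction hperm with
  | nil => intro y _ _ _ h; exact h
  | @cons a u' v' h ih =>
    intro y hlt hanti hβ h'
    have hβ' : (y ++ [a]) ++ β :: z ∈ Z := by simpa using hbins hZ hβ [a] []
    have h'' : (y ++ [a]) ++ u' ++ z ∈ Z := by simpa using h'
    have := ih (y ++ [a]) (fun x hx => hlt x (by simp [hx]))
      (fun x hx x' hx' => hanti x (by simp [hx]) x' (by simp [hx'])) hβ' h''
    simpa using this
  | @swap x₁ x₂ l =>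
    intro y hlt hanti hβ h'
    -- u = x₂ :: x₁ :: l, v = x₁ :: x₂ :: l
    by_cases hx : x₁ = x₂
    · subst hx; exact h'
    · have h1 : ¬ x₂ ≤ x₁ := fun hle => hx (hanti x₂ (by simp) x₁ (by simp) hle).symm
      have h2 : ¬ x₁ ≤ x₂ := fun hle => hx (hanti x₁ (by simp) x₂ (by simp) hle)
      have hw : y ++ x₂ :: x₁ :: (l ++ z) ∈ Z := by simpa using h'
      have hβw : y ++ β :: (l ++ z) ∈ Z := by simpa using hbins hZ hβ [] l
      have := hp y (l ++ z) x₂ x₁ β h1 h2 (hlt x₂ (by simp)) (hlt x₁ (by simp)) hw hβw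
      simpa using this
  | @trans u' v' w' h₁ h₂ ih₁ ih₂ =>
    intro y hlt hanti hβ h'
    exact ih₂ y (fun x hx => hlt x (h₁.mem_iff.mpr hx))
      (fun x hx x' hx' => hanti x (h₁.mem_iff.mpr hx) x' (h₁.mem_iff.mpr hx')) hβ
      (ih₁ y hlt hanti hβ h')

lemma pair_sublist_decomp {α : Type*} {a b : α} :
    ∀ {u : List α}, List.Sublist [a, b] u → ∃ p m q, u = p ++ a :: m ++ b :: q := by
  intro u h
  induction u with
  | nil => exact absurd h (by simp)
  | cons c u ih =>
    cases h with
    | cons _ h' =>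
      obtain ⟨p, m, q, rfl⟩ := ih h'
      exact ⟨c :: p, m, q, rfl⟩
    | cons_cons _ h' =>
      obtain ⟨m, q, rfl⟩ := List.append_of_mem (show b ∈ u from h'.subset (by simp))
      exact ⟨[], m, q, rfl⟩

/-- core lemma: from a word of letters below β, pass to its maximal letters -/
lemma core (hZ : IsUpperWordSet Z) (hr : StableReduce Z) (hp : StablePerm Z)
    {y z : List Λ} {β : Λ} (hβ : y ++ β :: z ∈ Z) :
    ∀ (n : ℕ) (u : List Λ), u.length ≤ n → (∀ a ∈ u, a < β) → y ++ u ++ z ∈ Z →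
      ∀ t : List Λ, t.Nodup →
        (∀ d : Λ, d ∈ t ↔ (d ∈ u ∧ ∀ d' ∈ u, d ≤ d' → d = d')) →
        y ++ t ++ z ∈ Z := by
  intro n
  induction n with
  | zero =>
    intro u hlen _ h t _ hspec
    have hu : u = [] := List.eq_nil_of_length_eq_zero (Nat.le_zero.mp hlen)
    subst hu
    have ht : t = [] := List.eq_nil_iff_forall_not_mem.mpr
      (fun d hd => by simpa using ((hspec d).1 hd).1)
    subst ht; exact h
  | succ n ih =>
    intro u hlen hlt h t ht hspec
    by_cases hpw : u.Pairwise (fun a b => ¬(a ≤ b ∨ b ≤ a))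
    · -- u is an antichain; t is a permutation of u
      have hanti : ∀ a ∈ u, ∀ b ∈ u, a ≤ b → a = b := by
        intro a ha b hb hab
        by_contra hne
        haveI : Std.Symm (fun a b : Λ => ¬(a ≤ b ∨ b ≤ a)) := ⟨fun x y hxy => by tauto⟩
        exact (List.Pairwise.forall hpw ha hb hne) (Or.inl hab)
      have hnd : u.Nodup := hpw.imp (fun {x y} hxy => fun he => hxy (he ▸ Or.inl le_rfl))
      have hmemeq : ∀ d : Λ, d ∈ t ↔ d ∈ u := by
        intro d
        rw [hspec d]
        exact ⟨fun h => h.1, fun h => ⟨h, fun d' hd' hle => hanti d h d' hd' hle⟩⟩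
      have hperm : u.Perm t := (List.perm_ext_iff_of_nodup hnd ht).mpr
        (fun d => (hmemeq d).symm)
      exact permZ hZ hp hperm y hlt hanti hβ h
    · -- u has a comparable pair
      rw [List.pairwise_iff_forall_sublist] at hpw
      push_neg at hpw
      obtain ⟨a, b, hsl, hcmp⟩ := hpw
      obtain ⟨p, m, q, rfl⟩ := pair_sublist_decomp hsl
      obtain ⟨u', hlen', hsub, hdom, hu'⟩ := merge hZ hr hp hβ m p q a b hcmp hlt h
      apply ih u' (by omega) (fun x hx => hlt x (hsub x hx)) hu' t ht
      intro d
      rw [hspec d]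
      constructor
      · rintro ⟨hd, hmax⟩
        obtain ⟨d', hd', hdd'⟩ := hdom d hd
        have : d = d' := hmax d' (hsub d' hd') hdd'
        subst this
        exact ⟨hd', fun e he hde => hmax e (hsub e he) hde⟩
      · rintro ⟨hd, hmax⟩
        refine ⟨hsub d hd, fun e he hde => ?_⟩
        obtain ⟨e', he', hee'⟩ := hdom e he
        have hd' : d = e' := hmax e' he' (le_trans hde hee')
        exact le_antisymm hde (hd' ▸ hee')

end CompoundAux

namespace CompoundAux

variable {Λ : Type*} [PartialOrder Λ] {Z : Set (List Λ)}

lemma glb_left {α γ : Λ} (h : α ≤ γ) : IsGLB ({α, γ} : Set Λ) α := by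
  constructor
  · rintro x (rfl | rfl)
    · exact le_rfl
    · exact h
  · intro b hb
    exact hb (Set.mem_insert _ _)

/-- replace each letter of `as` by its meet with β (or cancel it) -/
lemma step1 (hZ : IsUpperWordSet Z) (hc : StableCancel Z) (hm : StableMeet Z)
    (hmeet : ∀ a b : Λ, (∃ c, c ≤ a ∧ c ≤ b) → ∃ m, IsGLB ({a, b} : Set Λ) m)
    {z : List Λ} {β : Λ} :
    ∀ (as y : List Λ), (∀ α ∈ as, ¬ β ≤ α) → y ++ as ++ z ∈ Z → y ++ β :: z ∈ Z →
      ∃ M : List Λ, (∀ d ∈ M, ∃ α ∈ as, IsGLB ({α, β} : Set Λ) d) ∧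
        (∀ α ∈ as, (∃ c, c ≤ α ∧ c ≤ β) → ∃ d ∈ M, IsGLB ({α, β} : Set Λ) d) ∧
        y ++ M ++ z ∈ Z := by
  intro as
  induction as with
  | nil =>
    intro y _ h _
    exact ⟨[], by simp, by simp, h⟩
  | cons α as ih =>
    intro y hβle h hβ
    have hword : y ++ α :: (as ++ z) ∈ Z := by simpa using h
    by_cases hclb : ∃ c, c ≤ α ∧ c ≤ β
    · obtain ⟨m, hglb⟩ := hmeet α β hclb
      have hba : ¬ β ≤ α := hβle α (by simp)
      have hword2 : y ++ m :: (as ++ z) ∈ Z := by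
        by_cases hαβ : α ≤ β
        · have hα : α ∈ lowerBounds ({α, β} : Set Λ) := by
            rintro x (rfl | rfl)
            · exact le_rfl
            · exact hαβ
          have : m = α := le_antisymm (hglb.1 (Set.mem_insert _ _)) (hglb.2 hα)
          rw [this]; exact hword
        · exact hm y (as ++ z) α β m hαβ hba hglb hword (by simpa using hbins hZ hβ [] as)
      have hβ' : (y ++ [m]) ++ β :: z ∈ Z := by simpa using hbins hZ hβ [m] []
      obtain ⟨M', p1, p2, hM'⟩ := ih (y ++ [m]) (fun x hx => hβle x (by simp [hx]))
        (by simpa using hword2) hβ'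
      refine ⟨m :: M', ?_, ?_, by simpa using hM'⟩
      · intro d hd
        rcases List.mem_cons.mp hd with rfl | hd
        · exact ⟨α, by simp, hglb⟩
        · obtain ⟨α', hα', hg⟩ := p1 d hd
          exact ⟨α', by simp [hα'], hg⟩
      · intro α' hα' hclb'
        rcases List.mem_cons.mp hα' with rfl | hα'
        · exact ⟨m, by simp, hglb⟩
        · obtain ⟨d, hd, hg⟩ := p2 α' hα' hclb'
          exact ⟨d, by simp [hd], hg⟩
    · have h' : y ++ (as ++ z) ∈ Z :=
        hc y (as ++ z) α β (by tauto) hword (by simpa using hbins hZ hβ [] as)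
      obtain ⟨M, p1, p2, hM⟩ := ih y (fun x hx => hβle x (by simp [hx])) (by simpa using h') hβ
      refine ⟨M, ?_, ?_, hM⟩
      · intro d hd
        obtain ⟨α', hα', hg⟩ := p1 d hd
        exact ⟨α', by simp [hα'], hg⟩
      · intro α' hα' hclb'
        rcases List.mem_cons.mp hα' with rfl | hα'
        · exact absurd hclb' hclb
        · exact p2 α' hα' hclb'

end CompoundAux

open CompoundAux
/-- over a conditional meet-semilattice `Λ`, an upper set `Z` of `Λ*`
is stable under cancellation, reduction, permutation and meet iff it obeys the
compound rule. -/
theorem compound_rule_iff {Λ : Type*} [PartialOrder Λ]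
    (hmeet : ∀ a b : Λ, (∃ c, c ≤ a ∧ c ≤ b) → ∃ m, IsGLB ({a, b} : Set Λ) m)
    (Z : Set (List Λ)) (hZ : IsUpperWordSet Z) :
    StableAll Z ↔
      ∀ (y z as : List Λ) (β : Λ), as ≠ [] → (∀ α ∈ as, ¬ β ≤ α) →
        y ++ as ++ z ∈ Z → y ++ β :: z ∈ Z →
        ∀ t : List Λ, t.Nodup →
          (∀ δ : Λ, δ ∈ t ↔
            ((∃ α ∈ as, IsGLB ({α, β} : Set Λ) δ) ∧
              ∀ δ' : Λ, (∃ α ∈ as, IsGLB ({α, β} : Set Λ) δ') → δ ≤ δ' → δ = δ')) →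
          y ++ t ++ z ∈ Z := by

  constructor
  · rintro ⟨hc, hr, hp, hm⟩
    intro y z as β _ hβle h hβ t ht hspec
    obtain ⟨M, p1, p2, hM⟩ := step1 hZ hc hm hmeet as y hβle h hβ
    have hMlt : ∀ d ∈ M, d < β := by
      intro d hd
      obtain ⟨α, hα, hg⟩ := p1 d hd
      refine lt_of_le_of_ne (hg.1 (Set.mem_insert_of_mem _ rfl)) (fun he => ?_)
      exact hβle α hα (he ▸ hg.1 (Set.mem_insert _ _))
    have hMeq : ∀ d : Λ, (∃ α ∈ as, IsGLB ({α, β} : Set Λ) d) ↔ d ∈ M := by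
      intro d
      constructor
      · rintro ⟨α, hα, hg⟩
        obtain ⟨d', hd', hg'⟩ := p2 α hα
          ⟨d, hg.1 (Set.mem_insert _ _), hg.1 (Set.mem_insert_of_mem _ rfl)⟩
        exact (hg.unique hg') ▸ hd'
      · exact p1 d
    apply core hZ hr hp hβ M.length M le_rfl hMlt hM t ht
    intro d
    rw [hspec d]
    constructor
    · rintro ⟨h1, h2⟩
      exact ⟨(hMeq d).mp h1, fun d' hd' => h2 d' ((hMeq d').mpr hd')⟩
    · rintro ⟨h1, h2⟩
      exact ⟨(hMeq d).mpr h1, fun d' hd' => h2 d' ((hMeq d').mp hd')⟩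
  · intro H
    refine ⟨?_, ?_, ?_, ?_⟩
    · -- cancellation
      intro y z α β hno h1 h2
      have := H y z [α] β (by simp)
        (by
          intro α' hα'
          have e : α' = α := by simpa using hα'
          rw [e]
          exact fun hle => hno ⟨β, hle, le_rfl⟩)
        (by simpa using h1) h2 [] (by simp)
        (by
          intro δ
          simp only [List.not_mem_nil, false_iff, not_and]
          rintro ⟨α', hα', hg⟩
          have e : α' = α := by simpa using hα'
          rw [e] at hg
          exact absurd ⟨δ, hg.1 (Set.mem_insert _ _), hg.1 (Set.mem_insert_of_mem _ rfl)⟩ hno)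
      simpa using this
    · -- reduction
      intro y z α γ hαγ h1 h2
      have hglb : IsGLB ({α, γ} : Set Λ) α := glb_left hαγ.le
      have hng : ¬ γ ≤ α := fun hle => absurd (lt_of_le_of_lt hle hαγ) (lt_irrefl γ)
      have := H y z [α, α] γ (by simp)
        (by
          intro α' hα'
          have e : α' = α := by simpa using hα'
          rw [e]; exact hng)
        (by simpa using h1) h2 [α] (by simp)
        (by
          intro δ
          simp only [List.mem_singleton]
          constructor
          · intro hδ
            rw [hδ]
            refine ⟨⟨α, by simp, hglb⟩, ?_⟩
            rintro δ' ⟨α'', hα'', hg''⟩ hle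
            have e : α'' = α := by simpa using hα''
            rw [e] at hg''
            exact (hg''.unique hglb).symm
          · rintro ⟨⟨α'', hα'', hg''⟩, -⟩
            have e : α'' = α := by simpa using hα''
            rw [e] at hg''
            exact hg''.unique hglb)
      simpa using this
    · -- permutation
      intro y z α β γ hab hba hαγ hβγ h1 h2
      have hglbα : IsGLB ({α, γ} : Set Λ) α := glb_left hαγ.le
      have hglbβ : IsGLB ({β, γ} : Set Λ) β := glb_left hβγ.le
      have hne : β ≠ α := fun he => hba (he ▸ le_rfl)
      have hng : ∀ α' ∈ [α, β], ¬ γ ≤ α' := by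
        intro α' hα'
        rcases List.mem_cons.mp hα' with h | h
        · rw [h]; exact fun hle => absurd (lt_of_le_of_lt hle hαγ) (lt_irrefl γ)
        · have e : α' = β := by simpa using h
          rw [e]; exact fun hle => absurd (lt_of_le_of_lt hle hβγ) (lt_irrefl γ)
      have key : ∀ δ : Λ, (∃ α' ∈ [α, β], IsGLB ({α', γ} : Set Λ) δ) ↔ (δ = α ∨ δ = β) := by
        intro δ
        constructor
        · rintro ⟨α'', hα'', hg''⟩
          rcases List.mem_cons.mp hα'' with h | h
          · rw [h] at hg''; exact Or.inl (hg''.unique hglbα)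
          · have e : α'' = β := by simpa using h
            rw [e] at hg''; exact Or.inr (hg''.unique hglbβ)
        · rintro (h | h) <;> rw [h]
          · exact ⟨α, by simp, hglbα⟩
          · exact ⟨β, by simp, hglbβ⟩
      have := H y z [α, β] γ (by simp) hng (by simpa using h1) h2 [β, α]
        (by simp [hne])
        (by
          intro δ
          constructor
          · intro hδ
            have hδ' : δ = β ∨ δ = α := by simpa using hδ
            refine ⟨(key δ).mpr hδ'.symm, ?_⟩
            intro δ' hδ'' hle
            rcases (key δ').mp hδ'' with h' | h' <;> rcases hδ' with h'' | h''
            · rw [h'', h'] at hle; exact absurd hle hba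
            · rw [h'', h']
            · rw [h'', h']
            · rw [h'', h'] at hle; exact absurd hle hab
          · rintro ⟨h1', -⟩
            rcases (key δ).mp h1' with h' | h' <;> rw [h'] <;> simp)
      simpa using this
    · -- meet
      intro y z α β m hab hba hglb h1 h2
      have := H y z [α] β (by simp)
        (by
          intro α' hα'
          have e : α' = α := by simpa using hα'
          rw [e]; exact hba)
        (by simpa using h1) h2 [m] (by simp)
        (by
          intro δ
          simp only [List.mem_singleton]
          constructor
          · intro hδ
            rw [hδ]
            refine ⟨⟨α, by simp, hglb⟩, ?_⟩
            rintro δ' ⟨α'', hα'', hg''⟩ hle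
            have e : α'' = α := by simpa using hα''
            rw [e] at hg''
            exact (hg''.unique hglb).symm
          · rintro ⟨⟨α'', hα'', hg''⟩, -⟩
            have e : α'' = α := by simpa using hα''
            rw [e] at hg''
            exact hg''.unique hglb)
      simpa using this
end

section
/- If U and V are upper sets of Λ* that are each stable with respect to the cancellation, reduction, permutation, and meet rules, then the elementwise concatenation UV is an upper set stable with respect to those four rules as well. -/
/-! Each of the four rules derives `y t z` from premises `y l z` and `y γ z`, where `γ` is a
single letter. Since `U` and `V` are upper sets, the factors of a premise may be enlarged. If both
premises are cut inside `y`, or both inside `z`, they admit a common cut and the rule applies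
within one factor. If they are cut on opposite sides, or the first one is cut inside `l`, a factor
of one premise dominates the matching factor of the other, so again the rule applies within one
factor. A single letter cannot be cut, which rules out the one uncombinable configuration: both
premises cut inside their infixes. -/

section

open List

theorem List.SublistForall₂.exists_append_eq {α β : Type*} {R : α → β → Prop}
    {u v : List α} {w : List β} (h : SublistForall₂ R (u ++ v) w) :
    ∃ w₁ w₂, w = w₁ ++ w₂ ∧ SublistForall₂ R u w₁ ∧ SublistForall₂ R v w₂ := by
  obtain ⟨l, hl, hlw⟩ := sublistForall₂_iff.1 h
  rw [← take_append_drop u.length l] at hlw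
  obtain ⟨w₁, w₂, rfl, h₁, h₂⟩ := append_sublist_iff.1 hlw
  have hu : Forall₂ R u (l.take u.length) := by simpa using forall₂_take u.length hl
  have hv : Forall₂ R v (l.drop u.length) := by simpa using forall₂_drop u.length hl
  exact ⟨w₁, w₂, rfl, sublistForall₂_iff.2 ⟨_, hu, h₁⟩, sublistForall₂_iff.2 ⟨_, hv, h₂⟩⟩

variable {Λ : Type*} {U V : Set (List Λ)}

theorem mem_concatSet_infix {y l z : List Λ} (h : y ++ (l ++ z) ∈ concatSet U V) :
    (∃ p q, y = p ++ q ∧ p ∈ U ∧ q ++ (l ++ z) ∈ V) ∨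
      (∃ p q, z = p ++ q ∧ y ++ (l ++ p) ∈ U ∧ q ∈ V) ∨
      (∃ a d, l = a ++ d ∧ y ++ a ∈ U ∧ d ++ z ∈ V) := by
  obtain ⟨u, hu, v, hv, huv⟩ := h
  rcases append_eq_append_iff.1 huv with ⟨a, rfl, hlz⟩ | ⟨b, rfl, rfl⟩
  · rcases append_eq_append_iff.1 hlz with ⟨c, rfl, rfl⟩ | ⟨d, rfl, rfl⟩
    · exact Or.inr (Or.inl ⟨c, v, rfl, hu, hv⟩)
    · exact Or.inr (Or.inr ⟨a, d, rfl, hu, hv⟩)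
  · exact Or.inl ⟨u, b, rfl, hu, hv⟩

theorem mem_concatSet_cons {y z : List Λ} {γ : Λ} (h : y ++ γ :: z ∈ concatSet U V) :
    (∃ p q, y = p ++ q ∧ p ∈ U ∧ q ++ γ :: z ∈ V) ∨
      (∃ p q, z = p ++ q ∧ y ++ γ :: p ∈ U ∧ q ∈ V) := by
  rcases mem_concatSet_infix (l := [γ]) h with h | h | ⟨a, d, had, ha, hd⟩
  · exact Or.inl h
  · exact Or.inr h
  · rcases append_eq_singleton_iff.1 had.symm with ⟨rfl, rfl⟩ | ⟨rfl, rfl⟩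
    · exact Or.inl ⟨y, [], by simp, by simpa using ha, hd⟩
    · exact Or.inr ⟨[], z, rfl, ha, hd⟩

variable [PartialOrder Λ]

theorem IsUpperWordSet.mem_of_sublist_s17 {Z : Set (List Λ)} (hZ : IsUpperWordSet Z)
    {l₁ l₂ : List Λ} (h : l₁ <+ l₂) (hl₁ : l₁ ∈ Z) : l₂ ∈ Z :=
  hZ _ _ h.sublistForall₂ hl₁

theorem IsUpperWordSet.concatSet (hU : IsUpperWordSet U) (hV : IsUpperWordSet V) :
    IsUpperWordSet (concatSet U V) := by
  rintro x w hxw ⟨u, hu, v, hv, rfl⟩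
  obtain ⟨w₁, w₂, rfl, h₁, h₂⟩ := SublistForall₂.exists_append_eq hxw
  exact ⟨w₁, hU u w₁ h₁ hu, w₂, hV v w₂ h₂ hv, rfl⟩

theorem exists_common_cut_left (hV : IsUpperWordSet V) {p₁ q₁ p₂ q₂ s₁ s₂ : List Λ}
    (h : p₁ ++ q₁ = p₂ ++ q₂) (hp₁ : p₁ ∈ U) (hp₂ : p₂ ∈ U) (hq₁ : q₁ ++ s₁ ∈ V)
    (hq₂ : q₂ ++ s₂ ∈ V) :
    ∃ p q, p₁ ++ q₁ = p ++ q ∧ p ∈ U ∧ q ++ s₁ ∈ V ∧ q ++ s₂ ∈ V := by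
  rcases append_eq_append_iff.1 h with ⟨a, rfl, rfl⟩ | ⟨b, rfl, rfl⟩
  · exact ⟨p₁, a ++ q₂, rfl, hp₁, hq₁,
      hV.mem_of_sublist_s17 ((sublist_append_right a q₂).append_right s₂) hq₂⟩
  · exact ⟨p₂, b ++ q₁, by simp, hp₂,
      hV.mem_of_sublist_s17 ((sublist_append_right b q₁).append_right s₁) hq₁, hq₂⟩

theorem exists_common_cut_right (hU : IsUpperWordSet U) {p₁ q₁ p₂ q₂ y s₁ s₂ : List Λ}
    (h : p₁ ++ q₁ = p₂ ++ q₂) (hp₁ : y ++ (s₁ ++ p₁) ∈ U) (hp₂ : y ++ (s₂ ++ p₂) ∈ U)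
    (hq₁ : q₁ ∈ V) (hq₂ : q₂ ∈ V) :
    ∃ p q, p₁ ++ q₁ = p ++ q ∧ y ++ (s₁ ++ p) ∈ U ∧ y ++ (s₂ ++ p) ∈ U ∧ q ∈ V := by
  rcases append_eq_append_iff.1 h with ⟨a, rfl, rfl⟩ | ⟨b, rfl, rfl⟩
  · refine ⟨p₁ ++ a, q₂, by simp, hU.mem_of_sublist_s17 ?_ hp₁, hp₂, hq₂⟩
    exact ((sublist_append_left p₁ a).append_left s₁).append_left y
  · refine ⟨p₂ ++ b, q₁, rfl, hp₁, hU.mem_of_sublist_s17 ?_ hp₂, hq₁⟩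
    exact ((sublist_append_left p₂ b).append_left s₂).append_left y

def ClosedUnderRule (Z : Set (List Λ)) (l₁ l₂ t : List Λ) : Prop :=
  ∀ y z : List Λ, y ++ (l₁ ++ z) ∈ Z → y ++ (l₂ ++ z) ∈ Z → y ++ (t ++ z) ∈ Z

theorem ClosedUnderRule.concatSet (hU : IsUpperWordSet U) (hV : IsUpperWordSet V)
    {l t : List Λ} {γ : Λ} (hRU : ClosedUnderRule U l [γ] t)
    (hRV : ClosedUnderRule V l [γ] t) : ClosedUnderRule (concatSet U V) l [γ] t := by
  intro y z h₁ h₂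
  rw [singleton_append] at h₂
  rcases mem_concatSet_infix h₁ with ⟨p₁, q₁, rfl, hp₁, hq₁⟩ | ⟨p₁, q₁, rfl, hp₁, hq₁⟩ |
      ⟨a, d, rfl, ha, hd⟩ <;>
    rcases mem_concatSet_cons h₂ with ⟨p₂, q₂, hy, hp₂, hq₂⟩ | ⟨p₂, q₂, hz, hp₂, hq₂⟩
  · obtain ⟨p, q, e, hp, hq₁, hq₂⟩ := exists_common_cut_left hV hy hp₁ hp₂ hq₁ hq₂
    exact ⟨p, hp, _, hRV q z hq₁ hq₂, by simp [e]⟩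
  · have hq₂ : q₁ ++ γ :: z ∈ V := hV.mem_of_sublist_s17 (by grind) hq₂
    exact ⟨p₁, hp₁, _, hRV q₁ z hq₁ hq₂, by simp⟩
  · have hq₁ : q₂ ++ (l ++ (p₁ ++ q₁)) ∈ V := hV.mem_of_sublist_s17 (by grind) hq₁
    exact ⟨p₂, hp₂, _, hRV q₂ _ hq₁ hq₂, by simp [hy]⟩
  · obtain ⟨p, q, e, hp₁, hp₂, hq⟩ := exists_common_cut_right hU hz (s₂ := [γ]) hp₁ hp₂ hq₁ hq₂
    exact ⟨_, hRU y p hp₁ hp₂, q, hq, by simp [e]⟩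
  · have hd : q₂ ++ (a ++ d ++ z) ∈ V := hV.mem_of_sublist_s17 (by simp) hd
    exact ⟨p₂, hp₂, _, hRV q₂ z hd hq₂, by simp [hy]⟩
  · have ha : y ++ (a ++ d ++ p₂) ∈ U := hU.mem_of_sublist_s17 (by simp) ha
    exact ⟨_, hRU y p₂ ha hp₂, q₂, hq₂, by simp [hz]⟩

end

/-- the elementwise concatenation of two stable upper sets is a stable
upper set. -/
theorem concat_stable {Λ : Type*} [PartialOrder Λ] (U V : Set (List Λ))
    (hU : IsUpperWordSet U) (hV : IsUpperWordSet V)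
    (hUs : StableAll U) (hVs : StableAll V) :
    IsUpperWordSet (concatSet U V) ∧ StableAll (concatSet U V) := by
  obtain ⟨hUc, hUr, hUp, hUm⟩ := hUs
  obtain ⟨hVc, hVr, hVp, hVm⟩ := hVs
  refine ⟨hU.concatSet hV, ?cancel, ?reduce, ?perm, ?meet⟩
  case cancel =>
    intro y z α β h
    exact ClosedUnderRule.concatSet (l := [α]) (t := []) hU hV (hUc · · α β h) (hVc · · α β h) y z
  case reduce =>
    intro y z α γ h
    exact ClosedUnderRule.concatSet (l := [α, α]) (t := [α]) hU hV (hUr · · α γ h)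
      (hVr · · α γ h) y z
  case perm =>
    intro y z α β γ hαβ hβα hα hβ
    exact ClosedUnderRule.concatSet (l := [α, β]) (t := [β, α]) hU hV
      (hUp · · α β γ hαβ hβα hα hβ) (hVp · · α β γ hαβ hβα hα hβ) y z
  case meet =>
    intro y z α β m hαβ hβα hm
    exact ClosedUnderRule.concatSet (l := [α]) (t := [m]) hU hV (hUm · · α β m hαβ hβα hm)
      (hVm · · α β m hαβ hβα hm) y z
end
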